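/- arXiv:1108.1161 — 10 statements merged into one kernel-verified Lean document; each statement's English description precedes it below -/
import Mathlib

section
/- Let 1 ≤ s ≤ r be integers. If A ⊆ F₂^r is an (r,s)-set, then A ∪ {0} is an (r,s)-good set. Moreover, G₁(r,s) = G(r,s) − 1. -/
/-! If `x ≠ 0` with `x j₀ = 1`, replacing each `v j` by `v j + (x j + 1) • v j₀` keeps the family
independent and turns the conditions `⟨c, v j⟩ = x j` into `⟨c, ·⟩ = 1`, so adding `0` to an
`(r,s)`-set (for `x = 0`) gives a good set. Conversely, translating a good set by one of its elements
`b` keeps it good and makes it contain `0`; removing `0` leaves an `(r,s)`-set, because any `c`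
with `⟨c, v j⟩ = 1` for some `j` is nonzero. -/

/-- `A ⊆ F₂^r` is a *generic `(r,s)`-erasure correcting set* if for every `r × s` matrix `M`
over `F₂` of rank `s` there is `a ∈ A` such that the row vector `a·M` has Hamming weight `1`. -/
def IsGenericSet (r s : ℕ) (A : Set (Fin r → ZMod 2)) : Prop :=
  ∀ M : Matrix (Fin r) (Fin s) (ZMod 2), M.rank = s →
    ∃ a ∈ A, hammingNorm (Matrix.vecMul a M) = 1

/-- `F(r,s)`: the minimum cardinality of a generic `(r,s)`-set. -/
noncomputable def Fgen (r s : ℕ) : ℕ :=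
  sInf {n | ∃ A : Finset (Fin r → ZMod 2), IsGenericSet r s ↑A ∧ A.card = n}

/-- The standard bilinear form `⟨x,y⟩ = ∑ i, x i * y i` on `F₂^r`. -/
def bform {r : ℕ} (x y : Fin r → ZMod 2) : ZMod 2 := ∑ i, x i * y i

/-- `A ⊆ F₂^r` is an *(r,s)-set* if for every `s` linearly independent vectors `v₁, …, v_s`
there is `c ∈ A` with `⟨c, v_j⟩ = 1` for all `j`. -/
def IsRSSet (r s : ℕ) (A : Set (Fin r → ZMod 2)) : Prop :=
  ∀ v : Fin s → (Fin r → ZMod 2), LinearIndependent (ZMod 2) v →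
    ∃ c ∈ A, ∀ j, bform c (v j) = 1

/-- `G₁(r,s)`: the minimum cardinality of an `(r,s)`-set. -/
noncomputable def G1 (r s : ℕ) : ℕ :=
  sInf {n | ∃ A : Finset (Fin r → ZMod 2), IsRSSet r s ↑A ∧ A.card = n}

/-- `A ⊆ F₂^r` is an *(r,s)-good set* if for every `s` linearly independent vectors
`v₁, …, v_s` and every `x ∈ F₂^s` there is `c ∈ A` with `⟨c, v_j⟩ = x j` for all `j`. -/
def IsGoodSet (r s : ℕ) (A : Set (Fin r → ZMod 2)) : Prop :=
  ∀ v : Fin s → (Fin r → ZMod 2), LinearIndependent (ZMod 2) v →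
    ∀ x : Fin s → ZMod 2, ∃ c ∈ A, ∀ j, bform c (v j) = x j

/-- `G(r,s)`: the minimum cardinality of an `(r,s)`-good set. -/
noncomputable def Ggood (r s : ℕ) : ℕ :=
  sInf {n | ∃ A : Finset (Fin r → ZMod 2), IsGoodSet r s ↑A ∧ A.card = n}

/-- A linear code `C ⊆ F₂^ι` is *s-wise intersecting* if every `s` linearly independent
codewords have a common coordinate where they are all nonzero. -/
def IsIntersectingCode {ι : Type*} (s : ℕ) (C : Submodule (ZMod 2) (ι → ZMod 2)) : Prop :=
  ∀ u : Fin s → (ι → ZMod 2), (∀ j, u j ∈ C) → LinearIndependent (ZMod 2) u →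
    ∃ i, ∀ j, u j i ≠ 0

/-- `n(k,s)`: the minimum length `n` for which an `s`-wise intersecting `[n,k]` code exists. -/
noncomputable def minIntLen (k s : ℕ) : ℕ :=
  sInf {n | ∃ C : Submodule (ZMod 2) (Fin n → ZMod 2),
    Module.finrank (ZMod 2) C = k ∧ IsIntersectingCode s C}

/-- The Gaussian binomial coefficient `[k choose s]₂` as a real number. -/
noncomputable def gaussBinom (k s : ℕ) : ℝ :=
  ∏ i ∈ Finset.range s, ((2:ℝ)^(k-i) - 1) / ((2:ℝ)^(s-i) - 1)

open Matrix

theorem LinearIndependent.exists_dotProduct_eq {K m n : Type*} [Field K] [Fintype m]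
    [Fintype n] {v : m → n → K} (hv : LinearIndependent K v) (x : m → K) :
    ∃ c : n → K, ∀ j, v j ⬝ᵥ c = x j := by
  have hrange : LinearMap.range (Matrix.of v).mulVecLin = ⊤ := by
    apply Submodule.eq_top_of_finrank_eq
    rw [Module.finrank_fintype_fun_eq_card]
    exact LinearIndependent.rank_matrix (M := Matrix.of v) hv
  obtain ⟨c, hc⟩ := LinearMap.range_eq_top.mp hrange x
  exact ⟨c, fun j => congrFun hc j⟩

theorem LinearIndependent.add_smul_of_eq_zero {K V ι : Type*} [Field K] [AddCommGroup V]
    [Module K V] [Fintype ι] {v : ι → V} (hv : LinearIndependent K v) {i₀ : ι} {t : ι → K}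
    (ht : t i₀ = 0) : LinearIndependent K fun j => v j + t j • v i₀ := by
  set w := fun j => v j + t j • v i₀
  have hspan : Submodule.span K (Set.range w) = Submodule.span K (Set.range v) := by
    apply le_antisymm <;> rw [Submodule.span_le] <;> rintro _ ⟨j, rfl⟩
    · exact add_mem (Submodule.subset_span ⟨j, rfl⟩)
        (Submodule.smul_mem _ _ (Submodule.subset_span ⟨i₀, rfl⟩))
    · have : v j = w j - t j • w i₀ := by simp [w, ht]
      rw [this]
      exact sub_mem (Submodule.subset_span ⟨j, rfl⟩)
        (Submodule.smul_mem _ _ (Submodule.subset_span ⟨i₀, rfl⟩))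
  rw [linearIndependent_iff_card_eq_finrank_span, Set.finrank, hspan, finrank_span_eq_card hv]

theorem bform_eq_dotProduct {r : ℕ} (c y : Fin r → ZMod 2) : bform c y = c ⬝ᵥ y := rfl

variable {r s : ℕ}

theorem isGoodSet_univ : IsGoodSet r s Set.univ := fun v hv x => by
  obtain ⟨c, hc⟩ := hv.exists_dotProduct_eq x
  exact ⟨c, trivial, fun j => by rw [bform_eq_dotProduct, dotProduct_comm, hc]⟩

theorem IsGoodSet.nonempty (hsr : s ≤ r) {B : Set (Fin r → ZMod 2)} (hB : IsGoodSet r s B) :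
    B.Nonempty :=
  have hv := (Pi.basisFun (ZMod 2) (Fin r)).linearIndependent.comp _ (Fin.castLE_injective hsr)
  let ⟨c, hc, _⟩ := hB _ hv 0
  ⟨c, hc⟩

theorem IsGoodSet.image_add {B : Set (Fin r → ZMod 2)} (hB : IsGoodSet r s B)
    (b : Fin r → ZMod 2) : IsGoodSet r s ((· + b) '' B) := fun v hv x => by
  obtain ⟨c, hc, hcx⟩ := hB v hv (x - fun j => bform b (v j))
  refine ⟨c + b, ⟨c, hc, rfl⟩, fun j => ?_⟩
  rw [bform_eq_dotProduct, add_dotProduct, ← bform_eq_dotProduct, hcx j]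
  simp [bform_eq_dotProduct]

theorem IsGoodSet.isRSSet_diff_zero (hs : 1 ≤ s) {B : Set (Fin r → ZMod 2)}
    (hB : IsGoodSet r s B) : IsRSSet r s (B \ {0}) := fun v hv => by
  obtain ⟨c, hc, hc1⟩ := hB v hv 1
  refine ⟨c, ⟨hc, ?_⟩, hc1⟩
  rintro rfl
  simpa [bform_eq_dotProduct] using hc1 ⟨0, hs⟩

theorem IsRSSet.isGoodSet_union_zero {A : Set (Fin r → ZMod 2)} (hA : IsRSSet r s A) :
    IsGoodSet r s (A ∪ {0}) := by
  intro v hv x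
  by_cases hx : x = 0
  · exact ⟨0, Or.inr rfl, fun j => by simp [bform_eq_dotProduct, hx]⟩
  obtain ⟨j₀, hj₀⟩ := Function.ne_iff.mp hx
  have hxj₀ : x j₀ = 1 := Fin.eq_one_of_ne_zero _ hj₀
  -- Shearing every `v j` with `x j = 0` by `v j₀` turns the target `x` into the all-ones vector.
  obtain ⟨c, hcA, hc⟩ := hA _ (hv.add_smul_of_eq_zero (i₀ := j₀) (t := fun j => x j + 1)
    (by rw [hxj₀]; rfl))
  simp only [bform_eq_dotProduct, dotProduct_add, dotProduct_smul, smul_eq_mul] at hc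
  have hcj₀ : c ⬝ᵥ v j₀ = 1 := by grind
  refine ⟨c, Or.inl hcA, fun j => ?_⟩
  rw [bform_eq_dotProduct]
  grind

theorem Finset.exists_card_eq_sInf {α : Type*} {P : Finset α → Prop} (h : ∃ A, P A) :
    ∃ A, P A ∧ A.card = sInf {n | ∃ A, P A ∧ A.card = n} :=
  let ⟨A, hA⟩ := h
  Nat.sInf_mem (s := {n | ∃ A, P A ∧ A.card = n}) ⟨_, A, hA, rfl⟩

theorem exists_isRSSet_card_eq_Ggood_sub_one (hs : 1 ≤ s) (hsr : s ≤ r) :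
    ∃ C : Finset (Fin r → ZMod 2), IsRSSet r s C ∧ C.card = Ggood r s - 1 := by
  obtain ⟨B, hB, hBcard⟩ : ∃ B : Finset (Fin r → ZMod 2), IsGoodSet r s B ∧ B.card = Ggood r s :=
    Finset.exists_card_eq_sInf (P := fun B : Finset (Fin r → ZMod 2) => IsGoodSet r s B)
      ⟨Finset.univ, by rw [Finset.coe_univ]; exact isGoodSet_univ⟩
  obtain ⟨b, hb⟩ := hB.nonempty hsr
  refine ⟨(B.image (· + b)).erase 0, ?_, ?_⟩
  · rw [Finset.coe_erase, Finset.coe_image]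
    exact (hB.image_add b).isRSSet_diff_zero hs
  · have h0 : (0 : Fin r → ZMod 2) ∈ B.image (· + b) :=
      Finset.mem_image.mpr ⟨b, hb, funext fun i => CharTwo.add_self_eq_zero (b i)⟩
    rw [Finset.card_erase_of_mem h0, Finset.card_image_of_injective _ (add_left_injective b),
      hBcard]

theorem Ggood_le_card_add_one {A : Finset (Fin r → ZMod 2)} (hA : IsRSSet r s A) :
    Ggood r s ≤ A.card + 1 :=
  calc Ggood r s ≤ (insert 0 A).card := by
        refine Nat.sInf_le ⟨_, ?_, rfl⟩
        rw [Finset.coe_insert, Set.insert_eq, Set.union_comm]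
        exact hA.isGoodSet_union_zero
    _ ≤ A.card + 1 := Finset.card_insert_le _ _

/-- If `A` is an `(r,s)`-set then `A ∪ {0}` is an `(r,s)`-good set;
moreover `G₁(r,s) = G(r,s) − 1`. -/
theorem statement0 (r s : ℕ) (hs : 1 ≤ s) (hsr : s ≤ r) :
    (∀ A : Set (Fin r → ZMod 2), IsRSSet r s A → IsGoodSet r s (A ∪ {0})) ∧
    G1 r s = Ggood r s - 1 := by
  refine ⟨fun A hA => hA.isGoodSet_union_zero, ?_⟩
  obtain ⟨C, hC, hCcard⟩ := exists_isRSSet_card_eq_Ggood_sub_one hs hsr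
  obtain ⟨A, hA, hAcard⟩ : ∃ A : Finset (Fin r → ZMod 2), IsRSSet r s A ∧ A.card = G1 r s :=
    Finset.exists_card_eq_sInf ⟨C, hC⟩
  have hG1_le : G1 r s ≤ C.card := Nat.sInf_le ⟨C, hC, rfl⟩
  have hGgood_le := Ggood_le_card_add_one hA
  omega
end

section
/- Let 1 ≤ s < r be integers. A subset A ⊆ F₂^r is a generic (r,s)-set if and only if for every r×s matrix M over F₂ of rank s, the set {a·M : a ∈ A} ⊆ F₂^s contains a coset of an (s−1)-dimensional subspace of F₂^s that does not contain the zero vector (i.e., an affine hyperplane of F₂^s not passing through the origin). -/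
/-!
Write `B = {a·M : a ∈ A}`. Over `F₂` an affine hyperplane avoiding `0` is exactly the complement
of a linear hyperplane, so the right-hand side says that the vectors outside `B` lie in a
hyperplane, i.e. do not span `F₂^s`. If they did span, they would contain a basis `v`; multiplying
`M` by the inverse of the matrix `Q` with rows `v` gives another rank-`s` matrix, and a weight-one
vector `a·M Q⁻¹ = e_j` would force `a·M = v_j ∉ B`. Conversely, a hyperplane misses some unit
vector `e_j`, which then lies in its complement, hence in `B`.
-/

open Module Submodule Matrix

lemma ZMod.two_ne_zero_iff_eq_one {c : ZMod 2} : c ≠ 0 ↔ c = 1 := by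
  revert c; decide

lemma hammingNorm_eq_one_iff_eq_single {ι : Type*} [Fintype ι] [DecidableEq ι]
    {x : ι → ZMod 2} : hammingNorm x = 1 ↔ ∃ j, x = Pi.single j 1 := by
  rw [hammingNorm, Finset.card_eq_one]
  refine exists_congr fun j => ?_
  rw [Finset.ext_iff, funext_iff]
  refine forall_congr' fun i => ?_
  rcases eq_or_ne i j with rfl | hij
  · simp [ZMod.two_ne_zero_iff_eq_one]
  · simp [hij]

lemma ZMod.eq_of_ne_zero_of_finrank_eq_one {Q : Type*} [AddCommGroup Q] [Module (ZMod 2) Q]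
    (hQ : finrank (ZMod 2) Q = 1) {x y : Q} (hx : x ≠ 0) (hy : y ≠ 0) : x = y := by
  obtain ⟨c, rfl⟩ := (finrank_eq_one_iff_of_nonzero' y hy).mp hQ x
  rw [ZMod.two_ne_zero_iff_eq_one.mp (left_ne_zero_of_smul hx), one_smul]

section VectorSpace

variable {K V : Type*} [Field K] [AddCommGroup V] [Module K V] [FiniteDimensional K V]

lemma Submodule.exists_linearIndependent_fin_subset_of_span_eq_top {S : Set V} {n : ℕ}
    (hn : finrank K V = n) (hS : span K S = ⊤) :
    ∃ v : Fin n → V, LinearIndependent K v ∧ ∀ i, v i ∈ S := by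
  let b := Basis.ofSpan hS.ge
  let b' := b.reindex (b.indexEquiv (finBasisOfFinrankEq K V hn))
  refine ⟨b', b'.linearIndependent, fun i => Basis.ofSpan_subset hS.ge ?_⟩
  simp only [b', Basis.reindex_apply]
  exact Set.mem_range_self _

lemma Submodule.exists_le_notMem_finrank_add_one_eq_of_ne_top {p : Submodule K V} (hp : p ≠ ⊤) :
    ∃ (W : Submodule K V) (v : V), p ≤ W ∧ v ∉ W ∧ finrank K W + 1 = finrank K V := by
  obtain ⟨v, -, hv⟩ := SetLike.exists_of_lt (lt_top_iff_ne_top.mpr hp)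
  obtain ⟨f, hfv, hpf⟩ := exists_le_ker_of_notMem hv
  exact ⟨LinearMap.ker f, v, hpf, hfv,
    Dual.finrank_ker_add_one_of_ne_zero (ne_of_apply_ne (· v) hfv)⟩

end VectorSpace

lemma Submodule.exists_single_one_notMem_of_ne_top {R ι : Type*} [Semiring R] [Fintype ι]
    [DecidableEq ι] {W : Submodule R (ι → R)} (hW : W ≠ ⊤) : ∃ j, Pi.single j 1 ∉ W := by
  by_contra! h
  refine hW (eq_top_iff.mpr ?_)
  rw [← (Pi.basisFun R ι).span_eq, span_le]
  rintro _ ⟨j, rfl⟩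
  simpa using h j

lemma Submodule.sub_mem_of_notMem_of_finrank_add_one_eq {V : Type*} [AddCommGroup V]
    [Module (ZMod 2) V] [FiniteDimensional (ZMod 2) V] {W : Submodule (ZMod 2) V}
    (hW : finrank (ZMod 2) W + 1 = finrank (ZMod 2) V) {v x : V} (hv : v ∉ W) (hx : x ∉ W) :
    x - v ∈ W := by
  have hQ : finrank (ZMod 2) (V ⧸ W) = 1 := by
    have := W.finrank_quotient_add_finrank
    omega
  rw [← Submodule.Quotient.eq]
  exact ZMod.eq_of_ne_zero_of_finrank_eq_one hQ
    ((Submodule.Quotient.mk_eq_zero W).not.mpr hx) ((Submodule.Quotient.mk_eq_zero W).not.mpr hv)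

lemma IsGenericSet.exists_vecMul_eq {r s : ℕ} {A : Set (Fin r → ZMod 2)} (hA : IsGenericSet r s A)
    {M : Matrix (Fin r) (Fin s) (ZMod 2)} (hM : M.rank = s) {v : Fin s → Fin s → ZMod 2}
    (hv : LinearIndependent (ZMod 2) v) : ∃ a ∈ A, ∃ j, a ᵥ* M = v j := by
  set Q := Matrix.of v
  have hQ : IsUnit Q.det :=
    (isUnit_iff_isUnit_det Q).mp (linearIndependent_rows_iff_isUnit.mp hv)
  obtain ⟨a, haA, ha⟩ := hA (M * Q⁻¹) <| by
    rw [rank_mul_eq_left_of_isUnit_det _ _ (isUnit_nonsing_inv_det _ hQ), hM]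
  obtain ⟨j, hj⟩ := hammingNorm_eq_one_iff_eq_single.mp ha
  refine ⟨a, haA, j, ?_⟩
  calc a ᵥ* M = a ᵥ* (M * Q⁻¹ * Q) := by
        rw [Matrix.mul_assoc, nonsing_inv_mul _ hQ, Matrix.mul_one]
    _ = Pi.single j 1 ᵥ* Q := by rw [← vecMul_vecMul, hj]
    _ = v j := single_one_vecMul j Q

theorem statement1_general (r s : ℕ) (A : Set (Fin r → ZMod 2)) :
    IsGenericSet r s A ↔
      ∀ M : Matrix (Fin r) (Fin s) (ZMod 2), M.rank = s →
        ∃ (W : Submodule (ZMod 2) (Fin s → ZMod 2)) (v : Fin s → ZMod 2),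
          Module.finrank (ZMod 2) W = s - 1 ∧ v ∉ W ∧
          ((fun w => v + w) '' (W : Set (Fin s → ZMod 2))) ⊆
            {x | ∃ a ∈ A, Matrix.vecMul a M = x} := by
  constructor
  · intro hA M hM
    set B := {x | ∃ a ∈ A, a ᵥ* M = x}
    have hspan : span (ZMod 2) Bᶜ ≠ ⊤ := fun h => by
      obtain ⟨v, hv, hvB⟩ := exists_linearIndependent_fin_subset_of_span_eq_top
        (finrank_fin_fun (ZMod 2)) h
      obtain ⟨a, haA, j, haj⟩ := hA.exists_vecMul_eq hM hv
      exact hvB j ⟨a, haA, haj⟩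
    obtain ⟨W, v, hBW, hv, hW⟩ := exists_le_notMem_finrank_add_one_eq_of_ne_top hspan
    refine ⟨W, v, by rw [finrank_fin_fun] at hW; omega, hv, ?_⟩
    rintro _ ⟨w, hw, rfl⟩
    by_contra hvw
    exact hv ((W.add_mem_iff_left hw).mp (hBW (subset_span hvw)))
  · intro h M hM
    obtain ⟨W, v, hW, hv, hsub⟩ := h M hM
    have hW_ne_top : W ≠ ⊤ := fun hW_top => hv (hW_top ▸ mem_top)
    have hW1 : finrank (ZMod 2) W + 1 = finrank (ZMod 2) (Fin s → ZMod 2) := by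
      have := Submodule.finrank_lt hW_ne_top
      rw [finrank_fin_fun] at this ⊢
      omega
    obtain ⟨j, hj⟩ := exists_single_one_notMem_of_ne_top hW_ne_top
    obtain ⟨a, haA, haj⟩ := hsub ⟨_, W.sub_mem_of_notMem_of_finrank_add_one_eq hW1 hv hj,
      add_sub_cancel v _⟩
    exact ⟨a, haA, hammingNorm_eq_one_iff_eq_single.mpr ⟨j, haj⟩⟩

/-- `A` is a generic `(r,s)`-set iff for every full-rank `r × s` matrix `M`, the set
`{a·M : a ∈ A}` contains an affine hyperplane of `F₂^s` not passing through the origin. -/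
theorem statement1 (r s : ℕ) (hs : 1 ≤ s) (hsr : s < r) (A : Set (Fin r → ZMod 2)) :
    IsGenericSet r s A ↔
      ∀ M : Matrix (Fin r) (Fin s) (ZMod 2), M.rank = s →
        ∃ (W : Submodule (ZMod 2) (Fin s → ZMod 2)) (v : Fin s → ZMod 2),
          Module.finrank (ZMod 2) W = s - 1 ∧ v ∉ W ∧
          ((fun w => v + w) '' (W : Set (Fin s → ZMod 2))) ⊆
            {x | ∃ a ∈ A, Matrix.vecMul a M = x} :=
  statement1_general r s A
end

section
/- Let 2 ≤ s ≤ r be integers and let A ⊆ F₂^r be a generic (r,s)-set. Then for every (r−s)-dimensional linear subspace V of F₂^r, the set A meets at least 2^{s−1} distinct cosets of V in F₂^r. -/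
/-!
Let `Q = F₂^r ⧸ V`, of dimension `s`, and `B ⊆ Q` the image of `A`. For a basis `b` of `Q`, the
`r × s` matrix of `a ↦ (coordinates of a + V in b)` has rank `s`, so genericity yields `a ∈ A`
whose coordinate vector has weight one, i.e. whose image is some `b j`: the set `B` meets every
basis of `Q`. Hence `Bᶜ` contains no basis, so it lies in a proper subspace, `|Bᶜ| ≤ 2^(s-1)`,
and `|B| ≥ 2^s - 2^(s-1) = 2^(s-1)`.
-/

open Module

theorem exists_eq_single_one_of_hammingNorm_eq_one {ι : Type*} [Fintype ι] [DecidableEq ι]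
    {w : ι → ZMod 2} (h : hammingNorm w = 1) : ∃ j, w = Pi.single j 1 := by
  obtain ⟨j, hj⟩ := Finset.card_eq_one.mp h
  refine ⟨j, funext fun i => ?_⟩
  have hi : w i ≠ 0 ↔ i = j := by simpa using Finset.ext_iff.mp hj i
  by_cases hij : i = j
  · subst hij
    have hnonzero : ∀ x : ZMod 2, x ≠ 0 → x = 1 := by decide
    rw [Pi.single_eq_same]
    exact hnonzero _ (hi.mpr rfl)
  · rw [Pi.single_eq_of_ne hij]
    exact not_not.mp (mt hi.mp hij)

open Matrix in
theorem IsGenericSet.exists_apply_eq_single {r s : ℕ} {A : Set (Fin r → ZMod 2)}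
    (hA : IsGenericSet r s A) {L : (Fin r → ZMod 2) →ₗ[ZMod 2] (Fin s → ZMod 2)}
    (hL : Function.Surjective L) : ∃ a ∈ A, ∃ j, L a = Pi.single j 1 := by
  have hvecMul : ∀ a, vecMul a (LinearMap.toMatrix' L)ᵀ = L a := fun a => by
    rw [vecMul_transpose, LinearMap.toMatrix'_mulVec]
  have hrank : (LinearMap.toMatrix' L)ᵀ.rank = s := by
    rw [rank_transpose, rank, ← toLin'_apply', toLin'_toMatrix', LinearMap.range_eq_top.mpr hL,
      finrank_top, finrank_fin_fun]
  obtain ⟨a, haA, ha⟩ := hA _ hrank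
  rw [hvecMul] at ha
  exact ⟨a, haA, exists_eq_single_one_of_hammingNorm_eq_one ha⟩

theorem IsGenericSet.exists_apply_eq_basis {r s : ℕ} {A : Set (Fin r → ZMod 2)}
    (hA : IsGenericSet r s A) {W : Type*} [AddCommGroup W] [Module (ZMod 2) W]
    {f : (Fin r → ZMod 2) →ₗ[ZMod 2] W} (hf : Function.Surjective f)
    (b : Basis (Fin s) (ZMod 2) W) : ∃ a ∈ A, ∃ j, f a = b j := by
  obtain ⟨a, haA, j, hj⟩ := hA.exists_apply_eq_single (L := b.equivFun.toLinearMap ∘ₗ f)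
    (b.equivFun.surjective.comp hf)
  refine ⟨a, haA, j, ?_⟩
  rw [← Basis.equivFun_symm_single b j, ← hj]
  simp

theorem Submodule.span_compl_ne_top_of_forall_basis {K W : Type*} [DivisionRing K]
    [AddCommGroup W] [Module K W] [FiniteDimensional K W] {n : ℕ} (hn : finrank K W = n)
    {B : Set W} (hB : ∀ b : Basis (Fin n) K W, ∃ j, b j ∈ B) : span K Bᶜ ≠ ⊤ := by
  intro htop
  obtain ⟨t, htB, hspan, hli⟩ := exists_linearIndependent K Bᶜ
  let b : Basis t K W := Basis.mk hli (by rw [Subtype.range_coe, hspan, htop])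
  obtain ⟨j, hj⟩ := hB (b.reindex (b.indexEquiv (finBasisOfFinrankEq K W hn)))
  rw [Basis.reindex_apply, Basis.mk_apply] at hj
  exact htB (Subtype.prop _) hj

theorem card_mul_ncard_le_of_span_ne_top {K W : Type*} [Field K] [Finite K]
    [AddCommGroup W] [Module K W] [FiniteDimensional K W] {C : Set W}
    (hC : Submodule.span K C ≠ ⊤) : Nat.card K * C.ncard ≤ Nat.card W := by
  have : Finite W := Module.finite_of_finite K
  calc Nat.card K * C.ncard ≤ Nat.card K * Nat.card (Submodule.span K C) := by
        gcongr
        rw [← Nat.card_coe_set_eq]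
        exact Set.ncard_le_ncard Submodule.subset_span (Set.toFinite _)
    _ = Nat.card K ^ (finrank K (Submodule.span K C) + 1) := by
        rw [natCard_eq_pow_finrank (K := K) (V := Submodule.span K C), pow_succ']
    _ ≤ Nat.card W := by
        rw [natCard_eq_pow_finrank (K := K) (V := W)]
        exact Nat.pow_le_pow_right Nat.card_pos (Submodule.finrank_lt hC)

theorem sub_one_mul_card_le_mul_ncard_of_forall_basis {K W : Type*} [Field K] [Finite K]
    [AddCommGroup W] [Module K W] [FiniteDimensional K W] {n : ℕ} (hn : finrank K W = n)
    {B : Set W} (hB : ∀ b : Basis (Fin n) K W, ∃ j, b j ∈ B) :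
    (Nat.card K - 1) * Nat.card W ≤ Nat.card K * B.ncard := by
  have : Finite W := Module.finite_of_finite K
  have hcompl :=
    card_mul_ncard_le_of_span_ne_top (Submodule.span_compl_ne_top_of_forall_basis hn hB)
  have htotal := congrArg (Nat.card K * ·) (Set.ncard_add_ncard_compl B)
  simp only [mul_add] at htotal
  rw [Nat.sub_one_mul]
  omega

theorem statement3_general (r s : ℕ) (hsr : s ≤ r) (A : Set (Fin r → ZMod 2))
    (hA : IsGenericSet r s A) (V : Submodule (ZMod 2) (Fin r → ZMod 2))
    (hV : Module.finrank (ZMod 2) V = r - s) :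
    2 ^ (s - 1) ≤ Set.ncard (⇑V.mkQ '' A) := by
  have hQ : finrank (ZMod 2) ((Fin r → ZMod 2) ⧸ V) = s := by
    have := V.finrank_quotient_add_finrank
    rw [hV, finrank_fin_fun] at this
    omega
  have hmeets : ∀ b : Basis (Fin s) (ZMod 2) ((Fin r → ZMod 2) ⧸ V), ∃ j, b j ∈ V.mkQ '' A :=
    fun b => by
      obtain ⟨a, haA, j, hj⟩ := hA.exists_apply_eq_basis V.mkQ_surjective b
      exact ⟨j, a, haA, hj⟩
  have hbound := sub_one_mul_card_le_mul_ncard_of_forall_basis hQ hmeets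
  rw [Nat.card_zmod, natCard_eq_pow_finrank (K := ZMod 2), hQ, Nat.card_zmod] at hbound
  rcases s with _ | s
  · omega
  · rw [pow_succ] at hbound
    rw [add_tsub_cancel_right]
    omega

/-- A generic `(r,s)`-set meets at least `2^(s-1)` cosets of every `(r-s)`-dimensional
subspace `V` of `F₂^r`. -/
theorem statement3 (r s : ℕ) (hs : 2 ≤ s) (hsr : s ≤ r) (A : Set (Fin r → ZMod 2))
    (hA : IsGenericSet r s A) (V : Submodule (ZMod 2) (Fin r → ZMod 2))
    (hV : Module.finrank (ZMod 2) V = r - s) :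
    2 ^ (s - 1) ≤ Set.ncard (⇑V.mkQ '' A) :=
  statement3_general r s hsr A hA V hV
end

section
/- Let 2 ≤ s ≤ r be integers. Every generic (r,s)-set A ⊆ F₂^r satisfies |A| ≥ 2^{s−1} + r − s; consequently F(r,s) ≥ 2^{s−1} + r − s. -/
/-! Over `F₂`, a generic set `A` in an `s`-dimensional space meets every basis (the coordinate map
of a basis avoiding `A` would be a surjection onto `F₂^s` sending no point of `A` to a vector of
weight one), so its complement lies in a hyperplane and `|A| ≥ 2^s - 2^(s-1)`. In higher dimension,
projecting along the difference of two points of `A` keeps `A` generic and identifies those two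
points, so each extra dimension costs at least one more point. -/

open Module Submodule

theorem hammingNorm_eq_one_iff {ι β : Type*} [Fintype ι] [DecidableEq ι] [Zero β]
    [DecidableEq β] {x : ι → β} :
    hammingNorm x = 1 ↔ ∃ i c, c ≠ 0 ∧ x = Pi.single i c := by
  rw [hammingNorm, Finset.card_eq_one]
  constructor
  · rintro ⟨i, hi⟩
    have hmem : ∀ k, x k ≠ 0 ↔ k = i := fun k => by
      simpa using Finset.ext_iff.mp hi k
    refine ⟨i, x i, (hmem i).mpr rfl, funext fun k => ?_⟩
    by_cases hk : k = i
    · subst hk; simp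
    · rw [Pi.single_eq_of_ne hk]
      exact not_not.mp fun h => hk ((hmem k).mp h)
  · rintro ⟨i, c, hc, rfl⟩
    exact ⟨i, by ext k; by_cases hk : k = i <;> simp [Pi.single_apply, hk, hc]⟩

theorem hammingNorm_eq_one_iff_eq_single_one {ι : Type*} [Fintype ι] [DecidableEq ι]
    {x : ι → ZMod 2} : hammingNorm x = 1 ↔ ∃ i, x = Pi.single i 1 := by
  have h2 : ∀ c : ZMod 2, c ≠ 0 ↔ c = 1 := by decide
  simp only [hammingNorm_eq_one_iff, h2, exists_eq_left]

theorem Matrix.rank_eq_card_iff_surjective_vecMulLinear {m n K : Type*} [Fintype m] [Fintype n]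
    [Field K] (M : Matrix m n K) :
    M.rank = Fintype.card n ↔ Function.Surjective M.vecMulLinear := by
  rw [← rank_transpose, rank, mulVecLin_transpose, ← LinearMap.range_eq_top,
    eq_top_iff_finrank_eq (K := K), finrank_fintype_fun_eq_card]

theorem exists_surjective_linearMap_fin {K W : Type*} [Field K] [AddCommGroup W] [Module K W]
    [FiniteDimensional K W] {s : ℕ} (h : s ≤ finrank K W) :
    ∃ ψ : W →ₗ[K] (Fin s → K), Function.Surjective ψ :=
  ⟨LinearMap.funLeft K K (Fin.castLE h) ∘ₗ (finBasis K W).equivFun.toLinearMap,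
    (LinearMap.funLeft_surjective_of_injective K K _ (Fin.castLE_injective h)).comp
      (finBasis K W).equivFun.surjective⟩

theorem exists_surjective_linearMap_fin_apply_eq_zero {K V : Type*} [Field K] [AddCommGroup V]
    [Module K V] [FiniteDimensional K V] {s : ℕ} (h : s < finrank K V) (a : V) :
    ∃ φ : V →ₗ[K] (Fin s → K), Function.Surjective φ ∧ φ a = 0 := by
  have hq := (K ∙ a).finrank_quotient_add_finrank
  have ha : finrank K (K ∙ a) ≤ 1 := by simpa using finrank_span_le_card (R := K) {a}
  obtain ⟨ψ, hψ⟩ := exists_surjective_linearMap_fin (K := K) (W := V ⧸ K ∙ a) (s := s)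
    (by omega)
  refine ⟨ψ ∘ₗ (K ∙ a).mkQ, hψ.comp (K ∙ a).mkQ_surjective, ?_⟩
  simp [(Quotient.mk_eq_zero _).mpr (mem_span_singleton_self a)]

theorem Set.ncard_le_of_span_ne_top {K V : Type*} [Field K] [Finite K] [AddCommGroup V]
    [Module K V] [FiniteDimensional K V] {S : Set V} (h : span K S ≠ ⊤) :
    S.ncard ≤ Nat.card K ^ (finrank K V - 1) := by
  have : Finite V := Module.finite_of_finite K
  have hlt : finrank K (span K S) < finrank K V := finrank_lt h
  calc S.ncard ≤ (span K S : Set V).ncard := Set.ncard_le_ncard subset_span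
    _ = Nat.card K ^ finrank K (span K S) := by
      rw [← Nat.card_coe_set_eq, SetLike.coe_sort_coe, natCard_eq_pow_finrank (K := K)]
    _ ≤ Nat.card K ^ (finrank K V - 1) :=
      Nat.pow_le_pow_right Nat.card_pos (by omega)

/-- The coordinate-free form of `IsGenericSet`: `φ` plays the role of `a ↦ a ᵥ* M`. -/
def IsGeneric (K : Type*) {V : Type*} [Field K] [DecidableEq K] [AddCommGroup V] [Module K V]
    (s : ℕ) (A : Set V) : Prop :=
  ∀ φ : V →ₗ[K] (Fin s → K), Function.Surjective φ → ∃ a ∈ A, hammingNorm (φ a) = 1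

theorem isGenericSet_iff_isGeneric {r s : ℕ} {A : Set (Fin r → ZMod 2)} :
    IsGenericSet r s A ↔ IsGeneric (ZMod 2) s A := by
  have hrank (M : Matrix (Fin r) (Fin s) (ZMod 2)) :
      M.rank = s ↔ Function.Surjective M.vecMulLinear := by
    rw [← M.rank_eq_card_iff_surjective_vecMulLinear, Fintype.card_fin]
  refine ⟨fun hA φ hφ => ?_, fun hA M hM => hA M.vecMulLinear ((hrank M).mp hM)⟩
  obtain ⟨M, rfl⟩ : ∃ M : Matrix (Fin r) (Fin s) (ZMod 2), M.vecMulLinear = φ :=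
    ⟨(LinearMap.toMatrix' φ).transpose, by
      rw [← Matrix.mulVecLin_transpose, Matrix.transpose_transpose, ← Matrix.toLin'_apply',
        Matrix.toLin'_toMatrix']⟩
  exact hA M ((hrank M).mpr hφ)

section

variable {K V W : Type*} [Field K] [DecidableEq K] [AddCommGroup V] [Module K V]
  [AddCommGroup W] [Module K W] {s : ℕ}

theorem isGeneric_univ (hs : 0 < s) : IsGeneric K s (Set.univ : Set V) := by
  intro φ hφ
  obtain ⟨a, ha⟩ := hφ (Pi.single ⟨0, hs⟩ 1)
  exact ⟨a, trivial, hammingNorm_eq_one_iff.mpr ⟨_, 1, one_ne_zero, ha⟩⟩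

theorem IsGeneric.image {A : Set V} (hA : IsGeneric K s A) {f : V →ₗ[K] W}
    (hf : Function.Surjective f) : IsGeneric K s (f '' A) := by
  intro φ hφ
  obtain ⟨a, ha, h⟩ := hA (φ ∘ₗ f) (hφ.comp hf)
  exact ⟨f a, Set.mem_image_of_mem f ha, h⟩

theorem IsGeneric.exists_mem_ne [FiniteDimensional K V] {A : Set V} (hA : IsGeneric K s A)
    (h : s < finrank K V) (a : V) : ∃ b ∈ A, b ≠ a := by
  obtain ⟨φ, hφ, hφa⟩ := exists_surjective_linearMap_fin_apply_eq_zero h a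
  obtain ⟨b, hb, hnorm⟩ := hA φ hφ
  refine ⟨b, hb, fun hba => ?_⟩
  rw [hba, hφa, hammingNorm_zero] at hnorm
  exact zero_ne_one hnorm

end

section

variable {V : Type*} [AddCommGroup V] [Module (ZMod 2) V] {s : ℕ}

theorem IsGeneric.span_compl_ne_top [FiniteDimensional (ZMod 2) V] {A : Set V}
    (hA : IsGeneric (ZMod 2) s A) (hV : finrank (ZMod 2) V = s) : span (ZMod 2) Aᶜ ≠ ⊤ := by
  classical
  intro htop
  let b₀ := Basis.ofSpan htop.ge
  let b := b₀.reindex (b₀.indexEquiv (finBasisOfFinrankEq (ZMod 2) V hV))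
  obtain ⟨a, ha, hnorm⟩ := hA b.equivFun b.equivFun.surjective
  obtain ⟨j, hj⟩ := hammingNorm_eq_one_iff_eq_single_one.mp hnorm
  have hab : a = b j := by
    rw [← Basis.equivFun_symm_single b j, ← hj]
    exact (b.equivFun.symm_apply_apply a).symm
  exact Basis.ofSpan_subset htop.ge ⟨_, (b₀.reindex_apply _ j).symm⟩ (hab ▸ ha)

theorem IsGeneric.two_pow_pred_le_card [FiniteDimensional (ZMod 2) V] {A : Finset V}
    (hA : IsGeneric (ZMod 2) s (A : Set V)) (hs : 1 ≤ s) (hV : finrank (ZMod 2) V = s) :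
    2 ^ (s - 1) ≤ A.card := by
  have : Finite V := Module.finite_of_finite (ZMod 2)
  have hcompl := Set.ncard_le_of_span_ne_top (hA.span_compl_ne_top hV)
  have hsplit := Set.ncard_add_ncard_compl (A : Set V)
  rw [natCard_eq_pow_finrank (K := ZMod 2), Nat.card_zmod, hV] at hsplit
  rw [Nat.card_zmod, hV] at hcompl
  rw [Set.ncard_coe_finset] at hsplit
  have hpow : 2 ^ s = 2 ^ (s - 1) + 2 ^ (s - 1) := by
    rw [← two_mul, ← pow_succ', Nat.sub_add_cancel hs]
  omega

theorem IsGeneric.two_pow_pred_add_le_card {k : ℕ} [FiniteDimensional (ZMod 2) V] {A : Finset V}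
    (hA : IsGeneric (ZMod 2) s (A : Set V)) (hs : 1 ≤ s) (hV : finrank (ZMod 2) V = s + k) :
    2 ^ (s - 1) + k ≤ A.card := by
  classical
  induction k generalizing V with
  | zero => exact hA.two_pow_pred_le_card hs hV
  | succ k ih =>
    obtain ⟨a₀, ha₀, -⟩ := hA.exists_mem_ne (by omega) 0
    obtain ⟨a₁, ha₁, hne⟩ := hA.exists_mem_ne (by omega) a₀
    let p := (ZMod 2) ∙ (a₁ - a₀)
    have hp : finrank (ZMod 2) p = 1 := finrank_span_singleton (sub_ne_zero.mpr hne)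
    have hfinrank : finrank (ZMod 2) (V ⧸ p) = s + k := by
      have := p.finrank_quotient_add_finrank
      omega
    have himage : IsGeneric (ZMod 2) s (A.image p.mkQ : Set (V ⧸ p)) := by
      rw [Finset.coe_image]
      exact hA.image p.mkQ_surjective
    have hlt : (A.image p.mkQ).card < A.card := by
      refine Finset.card_image_le.lt_of_ne fun h => hne (Finset.card_image_iff.mp h ha₁ ha₀ ?_)
      exact (Submodule.Quotient.eq p).mpr (mem_span_singleton_self _)
    have := ih himage hfinrank
    omega

end

/-- Every generic `(r,s)`-set has size at least `2^(s-1) + r - s`; consequently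
`F(r,s) ≥ 2^(s-1) + r - s`. -/
theorem statement4 (r s : ℕ) (hs : 2 ≤ s) (hsr : s ≤ r) :
    (∀ A : Finset (Fin r → ZMod 2), IsGenericSet r s ↑A → 2 ^ (s - 1) + r - s ≤ A.card) ∧
    2 ^ (s - 1) + r - s ≤ Fgen r s := by
  have bound (A : Finset (Fin r → ZMod 2)) (hA : IsGenericSet r s ↑A) :
      2 ^ (s - 1) + r - s ≤ A.card := by
    have := (isGenericSet_iff_isGeneric.mp hA).two_pow_pred_add_le_card (k := r - s) (by omega)
      (by rw [finrank_fin_fun]; omega)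
    omega
  refine ⟨bound, le_csInf ⟨_, Finset.univ, ?_, rfl⟩ ?_⟩
  · rw [Finset.coe_univ, isGenericSet_iff_isGeneric]
    exact isGeneric_univ (by omega)
  · rintro _ ⟨A, hA, rfl⟩
    exact bound A hA
end

section
/- Let 2 ≤ s ≤ k be integers with k ≥ 2, and let C be an s-wise intersecting [n,k] code over F₂ with minimum distance d (the minimum Hamming weight of a nonzero codeword) and maximum distance D (the maximum Hamming weight of a codeword). Then n ≥ 2·n(k−1, s−1) + D − d + 1. -/
open Module

lemma zmod2_cases : ∀ a : ZMod 2, a = 0 ∨ a = 1 := by decide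

lemma zmod2_ne_zero {a : ZMod 2} (h : a ≠ 0) : a = 1 := by
  rcases zmod2_cases a with h0 | h1
  · exact absurd h0 h
  · exact h1

lemma pair_li {V : Type*} [AddCommGroup V] [Module (ZMod 2) V] {x y : V}
    (hx : x ≠ 0) (hy : y ≠ 0) (hxy : x ≠ y) :
    LinearIndependent (ZMod 2) ![x, y] := by
  rw [LinearIndependent.pair_iff]
  intro s t hst
  rcases zmod2_cases s with hs | hs <;> rcases zmod2_cases t with ht | ht <;>
    subst hs <;> subst ht <;> simp_all
  · exfalso
    apply hxy
    have h1 : y = -x := eq_neg_of_add_eq_zero_right hst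
    have h2 : -x = x := by
      rw [show -x = (-1 : ZMod 2) • x by rw [neg_one_smul], show (-1 : ZMod 2) = 1 by decide,
        one_smul]
    rw [h1, h2]

lemma extend_li {K V : Type*} [Field K] [AddCommGroup V] [Module K V] [FiniteDimensional K V]
    {j : ℕ} {v : Fin j → V} (hv : LinearIndependent K v) :
    ∀ m (hjm : j ≤ m), m ≤ Module.finrank K V →
      ∃ w : Fin m → V, LinearIndependent K w ∧ ∀ i : Fin j, w (Fin.castLE hjm i) = v i := by
  intro m hjm
  induction m, hjm using Nat.le_induction with
  | base => exact fun _ => ⟨v, hv, fun i => congrArg v (Fin.ext rfl)⟩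
  | succ m hm ih =>
    intro hle
    obtain ⟨w, hw, hwv⟩ := ih (by omega)
    obtain ⟨x, hx⟩ := exists_linearIndependent_snoc_of_lt_finrank hw (by omega)
    refine ⟨Fin.snoc w x, hx, fun i => ?_⟩
    have h1 : (Fin.castLE (by omega : j ≤ m+1) i) = Fin.castSucc (Fin.castLE hm i) := rfl
    rw [h1, Fin.snoc_castSucc, hwv]

lemma two_wise {n k s : ℕ} (hs : 2 ≤ s) (hsk : s ≤ k)
    {C : Submodule (ZMod 2) (Fin n → ZMod 2)}
    (hdim : Module.finrank (ZMod 2) C = k) (hint : IsIntersectingCode s C)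
    {x y : Fin n → ZMod 2} (hx : x ∈ C) (hy : y ∈ C)
    (hx0 : x ≠ 0) (hy0 : y ≠ 0) (hxy : x ≠ y) :
    ∃ i, x i ≠ 0 ∧ y i ≠ 0 := by
  set x' : C := ⟨x, hx⟩
  set y' : C := ⟨y, hy⟩
  have hx0' : x' ≠ 0 := fun h => hx0 (congrArg Subtype.val h)
  have hy0' : y' ≠ 0 := fun h => hy0 (congrArg Subtype.val h)
  have hxy' : x' ≠ y' := fun h => hxy (congrArg Subtype.val h)
  have hpair : LinearIndependent (ZMod 2) ![x', y'] := pair_li hx0' hy0' hxy'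
  obtain ⟨w, hw, hwv⟩ := extend_li hpair s hs (by rw [hdim]; exact hsk)
  have hwa : LinearIndependent (ZMod 2) fun j => ((w j : Fin n → ZMod 2)) := by
    exact hw.map' C.subtype (Submodule.ker_subtype C)
  obtain ⟨i, hi⟩ := hint (fun j => (w j : Fin n → ZMod 2)) (fun j => (w j).2) hwa
  refine ⟨i, ?_, ?_⟩
  · have h0 := hi (Fin.castLE hs 0)
    rwa [hwv 0] at h0
  · have h1 := hi (Fin.castLE hs 1)
    rwa [hwv 1] at h1

lemma minIntLen_le {ι : Type} [Fintype ι] {m s' : ℕ} (C' : Submodule (ZMod 2) (ι → ZMod 2))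
    (h1 : Module.finrank (ZMod 2) C' = m) (h2 : IsIntersectingCode s' C') :
    minIntLen m s' ≤ Fintype.card ι := by
  apply Nat.sInf_le
  set e : Fin (Fintype.card ι) ≃ ι := (Fintype.equivFin ι).symm
  set E : (ι → ZMod 2) ≃ₗ[ZMod 2] (Fin (Fintype.card ι) → ZMod 2) :=
    LinearEquiv.funCongrLeft (ZMod 2) (ZMod 2) e
  refine ⟨Submodule.map (E : (ι → ZMod 2) →ₗ[ZMod 2] _) C', ?_, ?_⟩
  · rw [LinearEquiv.finrank_map_eq E C', h1]
  · intro u hu hLI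
    set u' : Fin s' → (ι → ZMod 2) := fun j => E.symm (u j)
    have hmem : ∀ j, u' j ∈ C' := fun j => (Submodule.mem_map_equiv C').mp (hu j)
    have hcomp : (fun v => E v) ∘ u' = u := by
      funext j
      simp [u']
    have hLI' : LinearIndependent (ZMod 2) u' := by
      apply LinearIndependent.of_comp (E.toLinearMap)
      show LinearIndependent (ZMod 2) ((fun v => E v) ∘ u')
      rw [hcomp]; exact hLI
    obtain ⟨i, hi⟩ := h2 u' hmem hLI'
    refine ⟨e.symm i, fun j => ?_⟩
    have : u j = E (u' j) := by simp [u']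
    rw [this]
    show (u' j) (e (e.symm i)) ≠ 0
    rw [Equiv.apply_symm_apply]
    exact hi j

lemma zmod2_fun_neg {ι : Type*} (v : ι → ZMod 2) : -v = v := by
  funext i
  show -(v i) = v i
  rcases zmod2_cases (v i) with h|h <;> rw [h] <;> decide

lemma zmod2_fun_add_self {ι : Type*} (v : ι → ZMod 2) : v + v = 0 := by
  funext i
  show v i + v i = 0
  rcases zmod2_cases (v i) with h|h <;> rw [h] <;> decide

lemma sideB {n k s' : ℕ} {C : Submodule (ZMod 2) (Fin n → ZMod 2)}
    (hdim : Module.finrank (ZMod 2) C = k)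
    (hint : IsIntersectingCode (s' + 1) C)
    (htwo : ∀ x y : Fin n → ZMod 2, x ∈ C → y ∈ C → x ≠ 0 → y ≠ 0 → x ≠ y →
      ∃ i, x i ≠ 0 ∧ y i ≠ 0)
    (hs' : 1 ≤ s') {u : Fin n → ZMod 2} (hu : u ∈ C) (hu0 : u ≠ 0) :
    minIntLen (k - 1) s' ≤ n - hammingNorm u := by
  set Bset : Finset (Fin n) := Finset.univ.filter (fun i => u i = 0) with hBset
  set res : (Fin n → ZMod 2) →ₗ[ZMod 2] (↥Bset → ZMod 2) :=
    LinearMap.funLeft (ZMod 2) (ZMod 2) (fun i : ↥Bset => (i : Fin n)) with hres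
  have hresu : res u = 0 := by
    funext i
    have h2 := i.2
    exact (Finset.mem_filter.mp h2).2
  set φ : C →ₗ[ZMod 2] (↥Bset → ZMod 2) := res.comp C.subtype with hφ
  set u' : C := ⟨u, hu⟩ with hu'
  have hu'0 : u' ≠ 0 := fun h => hu0 (congrArg Subtype.val h)
  have hker : LinearMap.ker φ = Submodule.span (ZMod 2) {u'} := by
    apply le_antisymm
    · intro w hw
      have hwB : ∀ i : Fin n, u i = 0 → (w : Fin n → ZMod 2) i = 0 := by
        intro i hi
        have h0 : φ w = 0 := hw
        exact congrFun h0 ⟨i, by simp [hBset, hi]⟩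
      by_cases hw0 : w = 0
      · simp [hw0]
      · have hwamb : (w : Fin n → ZMod 2) ≠ 0 := fun h => hw0 (Subtype.ext h)
        have hwu : (w : Fin n → ZMod 2) = u := by
          by_contra hne
          have h1 : u + (w : Fin n → ZMod 2) ∈ C := C.add_mem hu w.2
          have h2 : u + (w : Fin n → ZMod 2) ≠ 0 := by
            intro h
            apply hne
            rw [eq_neg_of_add_eq_zero_right h, zmod2_fun_neg]
          have h3 : (w : Fin n → ZMod 2) ≠ u + (w : Fin n → ZMod 2) := by
            intro h
            apply hu0
            have h4 : u + (w : Fin n → ZMod 2) = 0 + (w : Fin n → ZMod 2) := by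
              rw [← h, zero_add]
            exact add_right_cancel h4
          obtain ⟨i, hwi, hui⟩ := htwo _ _ w.2 h1 hwamb h2 h3
          by_cases hu_i : u i = 0
          · exact hwi (hwB i hu_i)
          · apply hui
            show u i + (w : Fin n → ZMod 2) i = 0
            rw [zmod2_ne_zero hu_i, zmod2_ne_zero hwi]
            decide
        rw [show w = u' from Subtype.ext hwu]
        exact Submodule.mem_span_singleton_self u'
    · rw [Submodule.span_singleton_le_iff_mem]
      show φ u' = 0
      exact hresu
  have hfr : Module.finrank (ZMod 2) (LinearMap.range φ) = k - 1 := by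
    have hrk := LinearMap.finrank_range_add_finrank_ker φ
    rw [hker, finrank_span_singleton hu'0, hdim] at hrk
    omega
  have hintB : IsIntersectingCode s' (LinearMap.range φ) := by
    intro g hg hgLI
    choose w hwg using fun j => hg j
    set a : Fin s' → (Fin n → ZMod 2) := fun j => (w j : Fin n → ZMod 2) with ha'
    have ha : ∀ j, res (a j) = g j := fun j => hwg j
    have haC : ∀ j, a j ∈ C := fun j => (w j).2
    have haLI : LinearIndependent (ZMod 2) a := by
      apply LinearIndependent.of_comp res
      have hcomp : ⇑res ∘ a = g := funext ha
      rw [hcomp]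
      exact hgLI
    set j₀ : Fin s' := ⟨0, hs'⟩ with hj₀
    have hFC : ∀ j, (Fin.cons (u + a j₀) a : Fin (s' + 1) → Fin n → ZMod 2) j ∈ C := by
      intro j
      refine Fin.cases ?_ ?_ j
      · rw [Fin.cons_zero]; exact C.add_mem hu (haC _)
      · intro j'; rw [Fin.cons_succ]; exact haC j'
    have hFLI : LinearIndependent (ZMod 2) (Fin.cons (u + a j₀) a : Fin (s' + 1) → Fin n → ZMod 2) := by
      rw [linearIndependent_fin_cons]
      refine ⟨haLI, ?_⟩
      intro hmem
      have humem : u ∈ Submodule.span (ZMod 2) (Set.range a) := by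
        have h0 : a j₀ ∈ Submodule.span (ZMod 2) (Set.range a) :=
          Submodule.subset_span ⟨j₀, rfl⟩
        have h1 := Submodule.add_mem _ hmem h0
        rwa [add_assoc, zmod2_fun_add_self, add_zero] at h1
      rw [Submodule.mem_span_range_iff_exists_fun] at humem
      obtain ⟨c, hc⟩ := humem
      have hzero : ∑ j, c j • g j = 0 := by
        have h1 := congrArg res hc
        rw [map_sum, hresu] at h1
        simpa [map_smul, ha] using h1
      have hc0 := Fintype.linearIndependent_iff.mp hgLI c hzero
      apply hu0
      rw [← hc]
      simp [hc0]
    obtain ⟨i, hi⟩ := hint (Fin.cons (u + a j₀) a) hFC hFLI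
    have hui : u i = 0 := by
      by_contra hui
      have h1 := hi 0
      rw [Fin.cons_zero] at h1
      have h2 := hi j₀.succ
      rw [Fin.cons_succ] at h2
      apply h1
      show u i + a j₀ i = 0
      rw [zmod2_ne_zero hui, zmod2_ne_zero h2]
      decide
    refine ⟨⟨i, by simp [hBset, hui]⟩, fun j => ?_⟩
    rw [← ha j]
    show a j i ≠ 0
    have h2 := hi j.succ
    rwa [Fin.cons_succ] at h2
  have hle := minIntLen_le (LinearMap.range φ) hfr hintB
  have hcard : Fintype.card ↥Bset = n - hammingNorm u := by
    rw [Fintype.card_coe]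
    have h := Finset.card_filter_add_card_filter_not
      (p := fun i => u i = 0) (s := (Finset.univ : Finset (Fin n)))
    have hnorm : hammingNorm u = (Finset.univ.filter (fun i => ¬ u i = 0)).card := rfl
    rw [Finset.card_univ, Fintype.card_fin] at h
    rw [hBset, hnorm]
    omega
  rwa [hcard] at hle

lemma sideT {n k s' : ℕ} {C : Submodule (ZMod 2) (Fin n → ZMod 2)}
    (hdim : Module.finrank (ZMod 2) C = k)
    (hint : IsIntersectingCode (s' + 1) C)
    (htwo : ∀ x y : Fin n → ZMod 2, x ∈ C → y ∈ C → x ≠ 0 → y ≠ 0 → x ≠ y →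
      ∃ i, x i ≠ 0 ∧ y i ≠ 0)
    (hs' : 1 ≤ s') {y : Fin n → ZMod 2} (hy : y ∈ C) (hy0 : y ≠ 0) :
    minIntLen (k - 1) s' ≤ hammingNorm y - 1 := by
  obtain ⟨i₀, hi₀⟩ : ∃ i, y i ≠ 0 := by
    by_contra h
    push_neg at h
    apply hy0
    funext i
    simpa using h i
  set Tset : Finset (Fin n) := Finset.univ.filter (fun i => y i ≠ 0) with hTset
  have hi₀T : i₀ ∈ Tset := Finset.mem_filter.mpr ⟨Finset.mem_univ _, hi₀⟩
  set Jset : Finset (Fin n) := Tset.erase i₀ with hJset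
  set res : (Fin n → ZMod 2) →ₗ[ZMod 2] (↥Jset → ZMod 2) :=
    LinearMap.funLeft (ZMod 2) (ZMod 2) (fun i : ↥Jset => (i : Fin n)) with hres
  set ev : C →ₗ[ZMod 2] ZMod 2 := (LinearMap.proj i₀).comp C.subtype with hev
  set K0 := LinearMap.ker ev with hK0
  have hK0rank : Module.finrank (ZMod 2) K0 = k - 1 := by
    have hrk := LinearMap.finrank_range_add_finrank_ker ev
    have hsurj : LinearMap.range ev = ⊤ := by
      rw [LinearMap.range_eq_top]
      intro b
      refine ⟨b • ⟨y, hy⟩, ?_⟩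
      show b • y i₀ = b
      rw [zmod2_ne_zero hi₀, smul_eq_mul, mul_one]
    rw [hsurj, finrank_top, finrank_self, hdim] at hrk
    rw [← hK0] at hrk
    omega
  set ψ : K0 →ₗ[ZMod 2] (↥Jset → ZMod 2) := res.comp (C.subtype.comp K0.subtype) with hψ
  have hinj : LinearMap.ker ψ = ⊥ := by
    rw [LinearMap.ker_eq_bot']
    intro w hw
    have hwi₀ : (w.1.1 : Fin n → ZMod 2) i₀ = 0 := LinearMap.mem_ker.mp w.2
    have hwJ : ∀ i : Fin n, i ∈ Jset → (w.1.1 : Fin n → ZMod 2) i = 0 :=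
      fun i hi => congrFun hw ⟨i, hi⟩
    have hwamb : (w.1.1 : Fin n → ZMod 2) = 0 := by
      by_contra hne
      have hwy : (w.1.1 : Fin n → ZMod 2) ≠ y := by
        intro h
        apply hi₀
        rw [← h]
        exact hwi₀
      obtain ⟨i, hwi, hyi⟩ := htwo _ y w.1.2 hy hne hy0 hwy
      have hiT : i ∈ Tset := Finset.mem_filter.mpr ⟨Finset.mem_univ _, hyi⟩
      have hii₀ : i ≠ i₀ := by
        intro h
        subst h
        exact hwi hwi₀
      exact hwi (hwJ i (Finset.mem_erase.mpr ⟨hii₀, hiT⟩))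
    exact Subtype.ext (Subtype.ext hwamb)
  have hfr : Module.finrank (ZMod 2) (LinearMap.range ψ) = k - 1 := by
    have hrk := LinearMap.finrank_range_add_finrank_ker ψ
    rw [hinj, finrank_bot, hK0rank] at hrk
    omega
  have hintT : IsIntersectingCode s' (LinearMap.range ψ) := by
    intro g hg hgLI
    choose w hwg using fun j => hg j
    set a : Fin s' → (Fin n → ZMod 2) := fun j => ((w j).1.1 : Fin n → ZMod 2) with ha'
    have ha : ∀ j, res (a j) = g j := fun j => hwg j
    have haC : ∀ j, a j ∈ C := fun j => (w j).1.2
    have hai₀ : ∀ j, a j i₀ = 0 := fun j => LinearMap.mem_ker.mp (w j).2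
    have haLI : LinearIndependent (ZMod 2) a := by
      apply LinearIndependent.of_comp res
      have hcomp : ⇑res ∘ a = g := funext ha
      rw [hcomp]
      exact hgLI
    have hFC : ∀ j, (Fin.cons y a : Fin (s' + 1) → Fin n → ZMod 2) j ∈ C := by
      intro j
      refine Fin.cases ?_ ?_ j
      · rw [Fin.cons_zero]; exact hy
      · intro j'; rw [Fin.cons_succ]; exact haC j'
    have hFLI : LinearIndependent (ZMod 2) (Fin.cons y a : Fin (s' + 1) → Fin n → ZMod 2) := by
      rw [linearIndependent_fin_cons]
      refine ⟨haLI, ?_⟩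
      intro hmem
      rw [Submodule.mem_span_range_iff_exists_fun] at hmem
      obtain ⟨c, hc⟩ := hmem
      apply hi₀
      rw [← hc]
      simp [Finset.sum_apply, Pi.smul_apply, hai₀]
    obtain ⟨i, hi⟩ := hint (Fin.cons y a) hFC hFLI
    have hyi : y i ≠ 0 := by
      have h0 := hi 0
      rwa [Fin.cons_zero] at h0
    set j₀ : Fin s' := ⟨0, hs'⟩ with hj₀
    have hii₀ : i ≠ i₀ := by
      intro h
      subst h
      have h1 := hi j₀.succ
      rw [Fin.cons_succ] at h1
      exact h1 (hai₀ j₀)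
    have hiJ : i ∈ Jset :=
      Finset.mem_erase.mpr ⟨hii₀, Finset.mem_filter.mpr ⟨Finset.mem_univ _, hyi⟩⟩
    refine ⟨⟨i, hiJ⟩, fun j => ?_⟩
    rw [← ha j]
    show a j i ≠ 0
    have h2 := hi j.succ
    rwa [Fin.cons_succ] at h2
  have hle := minIntLen_le (LinearMap.range ψ) hfr hintT
  have hcard : Fintype.card ↥Jset = hammingNorm y - 1 := by
    rw [Fintype.card_coe, hJset, Finset.card_erase_of_mem hi₀T]
    rfl
  rwa [hcard] at hle


/-- For an `s`-wise intersecting `[n,k]` code with minimum distance `d` and maximum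
distance `D`, we have `n ≥ 2·n(k-1, s-1) + D - d + 1`. -/
theorem statement7 (n k s d D : ℕ) (hs : 2 ≤ s) (hsk : s ≤ k) (hk : 2 ≤ k)
    (C : Submodule (ZMod 2) (Fin n → ZMod 2))
    (hdim : Module.finrank (ZMod 2) C = k)
    (hint : IsIntersectingCode s C)
    (hd : IsLeast {w | ∃ v ∈ C, v ≠ 0 ∧ hammingNorm v = w} d)
    (hD : IsGreatest {w | ∃ v ∈ C, hammingNorm v = w} D) :
    2 * minIntLen (k - 1) (s - 1) + D - d + 1 ≤ n := by
  have htwo : ∀ x y : Fin n → ZMod 2, x ∈ C → y ∈ C → x ≠ 0 → y ≠ 0 → x ≠ y →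
      ∃ i, x i ≠ 0 ∧ y i ≠ 0 := fun x y hx hy hx0 hy0 hxy =>
    two_wise hs hsk hdim hint hx hy hx0 hy0 hxy
  obtain ⟨t, rfl⟩ : ∃ t, s = t + 1 := ⟨s - 1, by omega⟩
  have hs' : 1 ≤ t := by omega
  have hss : t + 1 - 1 = t := rfl
  obtain ⟨y, hyC, hy0, hyd⟩ := hd.1
  obtain ⟨u, huC, huD⟩ := hD.1
  have hd1 : 1 ≤ d := by
    rcases Nat.eq_zero_or_pos d with h | h
    · exfalso
      apply hy0
      rw [← hammingNorm_eq_zero (x := y)]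
      omega
    · exact h
  have hdD : d ≤ D := by
    have := hD.2 ⟨y, hyC, hyd⟩
    exact this
  have hu0 : u ≠ 0 := by
    intro h
    rw [h] at huD
    simp [hammingNorm_eq_zero] at huD
    omega
  have hB := sideB hdim hint htwo hs' huC hu0
  have hT := sideT hdim hint htwo hs' hyC hy0
  rw [huD] at hB
  rw [hyd] at hT
  have hDn : D ≤ n := by
    rw [← huD]
    calc hammingNorm u ≤ Fintype.card (Fin n) := hammingNorm_le_card_fintype
    _ = n := Fintype.card_fin n
  rw [hss]
  omega
end

section
/- Let 2 ≤ s < k be integers and let N be a positive integer with N ≤ 2^k − 1. If ∏_{j=1}^{N} (1 − 2^{k−s}/(2^k − j)) · (2^s − 1) · [k choose s]₂ < 1, then G₁(k,s) ≤ N, i.e., there exists a (k,s)-set of cardinality N. -/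
/-!
Count `N`-subsets of the `2 ^ k - 1` nonzero vectors of `F₂^k`. A subset fails to be a
`(k,s)`-set only if it misses one of the sets `E_v = {c | ⟨v j, c⟩ = 1 for all j}` with `v`
linearly independent. Each `E_v` is a coset of a subspace of codimension `s`, so it has
`2 ^ (k - s)` elements, and it only depends on `span v` and the nonzero functional `⟨·, c⟩` on
it, so there are at most `(2 ^ s - 1) [k choose s]₂` of them. The subsets missing a given `E_v`
are a fraction `∏_{j=1}^N (1 - 2^(k-s)/(2^k - j))` of all of them, and the union bound concludes.
-/

open Finset Matrix Module Submodule

theorem Finset.exists_mem_powersetCard_forall_inter_nonempty {α : Type*} [DecidableEq α]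
    {Ω : Finset α} {𝓔 : Finset (Finset α)} {m N : ℕ} (h𝓔 : ∀ E ∈ 𝓔, E ⊆ Ω ∧ m ≤ #E)
    (h : #𝓔 * (#Ω - m).choose N < (#Ω).choose N) :
    ∃ A ∈ Ω.powersetCard N, ∀ E ∈ 𝓔, (A ∩ E).Nonempty := by
  by_contra! hmiss
  have hcover : Ω.powersetCard N ⊆ 𝓔.biUnion fun E => (Ω \ E).powersetCard N := by
    intro A hA
    obtain ⟨E, hE, hAE⟩ := hmiss A hA
    rw [mem_powersetCard] at hA
    refine mem_biUnion.2 ⟨E, hE, mem_powersetCard.2 ⟨subset_sdiff.2 ⟨hA.1, ?_⟩, hA.2⟩⟩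
    rwa [disjoint_iff_inter_eq_empty]
  refine h.not_ge ?_
  calc (#Ω).choose N = #(Ω.powersetCard N) := (card_powersetCard N Ω).symm
    _ ≤ ∑ E ∈ 𝓔, #((Ω \ E).powersetCard N) := (card_le_card hcover).trans card_biUnion_le
    _ ≤ ∑ _E ∈ 𝓔, (#Ω - m).choose N := by
        refine sum_le_sum fun E hE => ?_
        rw [card_powersetCard, card_sdiff_of_subset (h𝓔 E hE).1]
        exact Nat.choose_le_choose N (Nat.sub_le_sub_left (h𝓔 E hE).2 _)
    _ = #𝓔 * (#Ω - m).choose N := by rw [sum_const, smul_eq_mul]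

theorem prod_one_sub_div_mul_descFactorial {n m N : ℕ} (hm : m < n) (hN : N < n) :
    (∏ j ∈ Icc 1 N, (1 - (m : ℝ) / (n - j))) * ((n - 1).descFactorial N : ℝ) =
      ((n - 1 - m).descFactorial N : ℝ) := by
  induction N with
  | zero => simp
  | succ N ih =>
    have hpos : (0 : ℝ) < n - (N + 1 : ℕ) := by
      rw [sub_pos]; exact_mod_cast hN
    have hcast : ((n - 1 - N : ℕ) : ℝ) = n - (N + 1 : ℕ) := by
      rw [Nat.cast_sub (by omega), Nat.cast_sub (by omega)]; push_cast; ring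
    rw [prod_Icc_succ_top (by omega), Nat.descFactorial_succ, Nat.descFactorial_succ]
    calc (∏ j ∈ Icc 1 N, (1 - (m : ℝ) / (n - j))) * (1 - m / (n - (N + 1 : ℕ))) *
          (((n - 1 - N) * (n - 1).descFactorial N : ℕ) : ℝ)
        = (∏ j ∈ Icc 1 N, (1 - (m : ℝ) / (n - j))) * ((n - 1).descFactorial N : ℝ) *
            (n - (N + 1 : ℕ) - m) := by
          rw [Nat.cast_mul, hcast]; field_simp
      _ = ((n - 1 - m - N) * (n - 1 - m).descFactorial N : ℕ) := by
          rw [ih (by omega)]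
          -- past `n - 1 - m` both sides vanish, so the truncated subtraction is harmless
          rcases le_or_gt N (n - 1 - m) with hNm | hNm
          · rw [Nat.cast_mul, Nat.cast_sub hNm, Nat.cast_sub (by omega), Nat.cast_sub (by omega)]
            push_cast; ring
          · rw [Nat.descFactorial_eq_zero_iff_lt.2 hNm]; simp

theorem prod_one_sub_div_mul_choose {n m N : ℕ} (hm : m < n) (hN : N < n) :
    (∏ j ∈ Icc 1 N, (1 - (m : ℝ) / (n - j))) * ((n - 1).choose N : ℝ) =
      ((n - 1 - m).choose N : ℝ) := by
  have h := prod_one_sub_div_mul_descFactorial hm hN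
  simp only [Nat.descFactorial_eq_factorial_mul_choose, Nat.cast_mul] at h
  have hfac : (N.factorial : ℝ) ≠ 0 := by positivity
  rw [← mul_right_inj' hfac, ← h]; ring

section LinearSystems

variable {F n : Type*} [Field F] [Fintype n]

theorem Matrix.mulVecLin_surjective_of_linearIndependent {m : Type*} [Fintype m]
    {M : Matrix m n F} (hM : LinearIndependent F M.row) : Function.Surjective M.mulVecLin := by
  rw [← LinearMap.range_eq_top]
  apply Submodule.eq_top_of_finrank_eq
  rw [← Matrix.rank, hM.rank_matrix, Module.finrank_fintype_fun_eq_card]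

theorem forall_dotProduct_eq_iff_of_span_eq {ι ι' : Type*} {v : ι → n → F} {w : ι' → n → F}
    (h : span F (Set.range v) = span F (Set.range w)) {c c' : n → F} :
    (∀ i, v i ⬝ᵥ c = v i ⬝ᵥ c') ↔ ∀ i, w i ⬝ᵥ c = w i ⬝ᵥ c' := by
  set g := (dotProductBilin F F).flip (c - c')
  have hv : (∀ i, v i ⬝ᵥ c = v i ⬝ᵥ c') ↔ span F (Set.range v) ≤ LinearMap.ker g := by
    simp [g, span_le, Set.range_subset_iff, sub_eq_zero]
  have hw : (∀ i, w i ⬝ᵥ c = w i ⬝ᵥ c') ↔ span F (Set.range w) ≤ LinearMap.ker g := by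
    simp [g, span_le, Set.range_subset_iff, sub_eq_zero]
  rw [hv, hw, h]

variable [Fintype F] [DecidableEq n] {s : ℕ}

local notation "q" => Fintype.card F

open scoped Classical in
noncomputable def linIndepTuples (F n : Type*) [Field F] [Fintype F] [Fintype n] [DecidableEq n]
    (s : ℕ) : Finset (Fin s → n → F) :=
  {v | LinearIndependent F v}

@[simp]
theorem mem_linIndepTuples {v : Fin s → n → F} :
    v ∈ linIndepTuples F n s ↔ LinearIndependent F v := by
  classical
  simp [linIndepTuples]

theorem card_linIndepTuples (hs : s ≤ Fintype.card n) :
    #(linIndepTuples F n s) = ∏ i ∈ range s, (q ^ Fintype.card n - q ^ i) := by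
  classical
  rw [linIndepTuples, ← Fintype.card_subtype, ← Nat.card_eq_fintype_card,
    card_linearIndependent (by rwa [Module.finrank_fintype_fun_eq_card]),
    Module.finrank_fintype_fun_eq_card, Fin.prod_univ_eq_prod_range (fun i => q ^ _ - q ^ i)]

theorem card_linIndepTuples_filter_span_eq {V : Submodule F (n → F)} (hV : finrank F V = s) :
    #{v ∈ linIndepTuples F n s | span F (Set.range v) = V} = ∏ i ∈ range s, (q ^ s - q ^ i) := by
  classical
  have hmem (v : Fin s → n → F) (hv : span F (Set.range v) = V) (j : Fin s) : v j ∈ V :=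
    hv ▸ subset_span (Set.mem_range_self j)
  let e : {v : Fin s → n → F // LinearIndependent F v ∧ span F (Set.range v) = V} ≃
      {u : Fin s → V // LinearIndependent F u} :=
    { toFun := fun v => ⟨fun j => ⟨v.1 j, hmem v.1 v.2.2 j⟩, .of_comp V.subtype v.2.1⟩
      invFun := fun u => ⟨V.subtype ∘ u.1, u.2.map' V.subtype V.ker_subtype, by
        rw [Set.range_comp, ← Submodule.map_span,
          u.2.span_eq_top_of_card_eq_finrank' (by simp [hV]), Submodule.map_top, range_subtype]⟩
      left_inv := fun _ => rfl
      right_inv := fun _ => rfl }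
  rw [linIndepTuples, filter_filter, ← Fintype.card_subtype, Fintype.card_congr e,
    ← Nat.card_eq_fintype_card, card_linearIndependent hV.ge, hV,
    Fin.prod_univ_eq_prod_range (fun i => q ^ s - q ^ i)]

theorem card_image_span_linIndepTuples_mul (hs : s ≤ Fintype.card n) :
    #((linIndepTuples F n s).image fun v => span F (Set.range v)) * ∏ i ∈ range s, (q ^ s - q ^ i) =
      ∏ i ∈ range s, (q ^ Fintype.card n - q ^ i) := by
  classical
  rw [← card_linIndepTuples hs, card_eq_sum_card_image (fun v => span F (Set.range v)),
    sum_congr rfl fun V hV => ?_, sum_const, smul_eq_mul]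
  obtain ⟨v, hv, rfl⟩ := mem_image.1 hV
  refine card_linIndepTuples_filter_span_eq ?_
  rw [finrank_span_eq_card (mem_linIndepTuples.1 hv), Fintype.card_fin]

variable [DecidableEq F]

def allOnesFiber (v : Fin s → n → F) : Finset (n → F) := {c | ∀ j, v j ⬝ᵥ c = 1}

theorem card_allOnesFiber {v : Fin s → n → F} (hv : LinearIndependent F v) :
    #(allOnesFiber v) = q ^ (Fintype.card n - s) := by
  set f := (Matrix.of v).mulVecLin
  have hf : Function.Surjective f := mulVecLin_surjective_of_linearIndependent hv
  have hfiber : allOnesFiber v = ({c | f c = 1} : Finset (n → F)) := by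
    ext c; simp [allOnesFiber, f, funext_iff, Matrix.mulVec]
  have hker : finrank F (LinearMap.ker f) = Fintype.card n - s := by
    have := LinearMap.finrank_range_add_finrank_ker f
    rw [LinearMap.range_eq_top.2 hf] at this
    simp at this
    omega
  classical
  rw [hfiber, AddMonoidHom.card_fiber_eq_of_mem_range f (hf 1) ⟨0, rfl⟩, ← hker,
    ← Module.card_eq_pow_finrank, Fintype.card_subtype]
  simp [f]

theorem allOnesFiber_subset_erase_zero [NeZero s] (v : Fin s → n → F) :
    allOnesFiber v ⊆ univ.erase 0 := fun c hc => by
  refine mem_erase.2 ⟨fun hc0 => ?_, mem_univ c⟩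
  simp [allOnesFiber, hc0] at hc

theorem allOnesFiber_nonempty {v : Fin s → n → F} (hv : LinearIndependent F v) :
    (allOnesFiber v).Nonempty :=
  card_pos.1 (by rw [card_allOnesFiber hv]; exact pow_pos Fintype.card_pos _)

theorem allOnesFiber_mem_image_of_span_eq [NeZero s] {v w : Fin s → n → F}
    (hv : LinearIndependent F v) (h : span F (Set.range v) = span F (Set.range w)) :
    allOnesFiber v ∈ (univ.erase 0).image
      fun x : Fin s → F => ({c | ∀ j, w j ⬝ᵥ c = x j} : Finset (n → F)) := by
  obtain ⟨c₀, hc₀⟩ := allOnesFiber_nonempty hv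
  simp only [allOnesFiber, mem_filter, mem_univ, true_and] at hc₀
  have hiff : ∀ c, (∀ j, v j ⬝ᵥ c = 1) ↔ ∀ j, w j ⬝ᵥ c = w j ⬝ᵥ c₀ := fun c => by
    simp_rw [← forall_dotProduct_eq_iff_of_span_eq h, hc₀]
  refine mem_image.2 ⟨fun j => w j ⬝ᵥ c₀, mem_erase.2 ⟨fun h0 => ?_, mem_univ _⟩, ?_⟩
  · have := (hiff 0).2 fun j => by simpa using (congrFun h0 j).symm
    simpa using this 0
  · ext c; simp [allOnesFiber, hiff]

theorem card_image_allOnesFiber_mul_le (hs0 : 0 < s) (hs : s ≤ Fintype.card n) :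
    #((linIndepTuples F n s).image allOnesFiber) * ∏ i ∈ range s, (q ^ s - q ^ i) ≤
      (q ^ s - 1) * ∏ i ∈ range s, (q ^ Fintype.card n - q ^ i) := by
  classical
  have : NeZero s := ⟨hs0.ne'⟩
  set T := linIndepTuples F n s
  set spans := T.image fun v => span F (Set.range v)
  have hfiber : ∀ V ∈ spans,
      #({v ∈ T | span F (Set.range v) = V}.image allOnesFiber) ≤ q ^ s - 1 := by
    intro V hV
    obtain ⟨w, -, rfl⟩ := mem_image.1 hV
    calc _ ≤ #((univ.erase 0).image
            fun x : Fin s → F => ({c | ∀ j, w j ⬝ᵥ c = x j} : Finset (n → F))) := by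
          refine card_le_card fun E hE => ?_
          obtain ⟨v, hv, rfl⟩ := mem_image.1 hE
          exact allOnesFiber_mem_image_of_span_eq (mem_linIndepTuples.1 (mem_filter.1 hv).1)
            (mem_filter.1 hv).2
      _ ≤ #(univ.erase (0 : Fin s → F)) := card_image_le
      _ = q ^ s - 1 := by simp [card_erase_of_mem]
  have hcount : #(T.image allOnesFiber) ≤ #spans * (q ^ s - 1) := by
    rw [← image_biUnion_filter_eq T fun v => span F (Set.range v), biUnion_image]
    exact card_biUnion_le_card_mul _ _ _ hfiber
  calc _ ≤ #spans * (q ^ s - 1) * ∏ i ∈ range s, (q ^ s - q ^ i) := Nat.mul_le_mul_right _ hcount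
    _ = _ := by rw [mul_right_comm, card_image_span_linIndepTuples_mul hs, mul_comm]

end LinearSystems

theorem gaussBinom_mul_prod {k s : ℕ} (hsk : s ≤ k) :
    gaussBinom k s * ∏ i ∈ range s, ((2 : ℝ) ^ s - 2 ^ i) = ∏ i ∈ range s, ((2 : ℝ) ^ k - 2 ^ i) := by
  rw [gaussBinom, ← prod_mul_distrib]
  refine prod_congr rfl fun i hi => ?_
  have his := mem_range.1 hi
  have hne : (2 : ℝ) ^ (s - i) - 1 ≠ 0 :=
    sub_ne_zero.2 (one_lt_pow₀ one_lt_two (by omega)).ne'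
  rw [← Nat.sub_add_cancel his.le, ← Nat.sub_add_cancel (his.le.trans hsk), pow_add, pow_add]
  simp only [Nat.add_sub_cancel]
  field_simp

theorem card_image_allOnesFiber_le_gaussBinom {k s : ℕ} (hs : 0 < s) (hsk : s ≤ k) :
    (#((linIndepTuples (ZMod 2) (Fin k) s).image allOnesFiber) : ℝ) ≤
      (2 ^ s - 1) * gaussBinom k s := by
  have h := card_image_allOnesFiber_mul_le (F := ZMod 2) (n := Fin k) hs (by simpa)
  simp only [ZMod.card, Fintype.card_fin] at h
  have hcast {a b : ℕ} (hab : a ≤ b) : ((2 ^ b - 2 ^ a : ℕ) : ℝ) = 2 ^ b - 2 ^ a := by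
    rw [Nat.cast_sub (Nat.pow_le_pow_right two_pos hab)]; push_cast; rfl
  have hR := (Nat.cast_le (α := ℝ)).2 h
  rw [Nat.cast_mul, Nat.cast_mul, Nat.cast_prod, Nat.cast_prod,
    Nat.cast_sub Nat.one_le_two_pow, prod_congr rfl fun i hi => hcast (mem_range.1 hi).le,
    prod_congr rfl fun i hi => hcast ((mem_range.1 hi).le.trans hsk), ← gaussBinom_mul_prod hsk,
    ← mul_assoc] at hR
  push_cast at hR
  refine le_of_mul_le_mul_right hR (prod_pos fun i hi => ?_)
  exact sub_pos.2 (pow_lt_pow_right₀ one_lt_two (mem_range.1 hi))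

theorem card_image_allOnesFiber_mul_choose_lt {k s N : ℕ} (hs : 0 < s) (hsk : s < k)
    (hN : N ≤ 2 ^ k - 1)
    (h : (∏ j ∈ Icc 1 N, (1 - (2 : ℝ) ^ (k - s) / ((2 : ℝ) ^ k - j))) *
      ((2 : ℝ) ^ s - 1) * gaussBinom k s < 1) :
    #((linIndepTuples (ZMod 2) (Fin k) s).image allOnesFiber) *
      (2 ^ k - 1 - 2 ^ (k - s)).choose N < (2 ^ k - 1).choose N := by
  have hprod := prod_one_sub_div_mul_choose (n := 2 ^ k) (m := 2 ^ (k - s)) (N := N)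
    (Nat.pow_lt_pow_right one_lt_two (by omega)) (by have := Nat.one_le_two_pow (n := k); omega)
  push_cast at hprod
  have hchoose : (0 : ℝ) < (2 ^ k - 1).choose N := by exact_mod_cast Nat.choose_pos hN
  set events := (linIndepTuples (ZMod 2) (Fin k) s).image allOnesFiber
  suffices (#events : ℝ) * (2 ^ k - 1 - 2 ^ (k - s)).choose N < (2 ^ k - 1).choose N by
    exact_mod_cast this
  calc (#events : ℝ) * (2 ^ k - 1 - 2 ^ (k - s)).choose N
      ≤ (2 ^ s - 1) * gaussBinom k s * (2 ^ k - 1 - 2 ^ (k - s)).choose N := by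
        gcongr; exact card_image_allOnesFiber_le_gaussBinom hs hsk.le
    _ = (∏ j ∈ Icc 1 N, (1 - (2 : ℝ) ^ (k - s) / (2 ^ k - j))) * (2 ^ s - 1) * gaussBinom k s *
          (2 ^ k - 1).choose N := by rw [← hprod]; ring
    _ < (2 ^ k - 1).choose N := mul_lt_of_lt_one_left hchoose h

theorem statement9_general (k s N : ℕ) (hs : 2 ≤ s) (hsk : s < k) (hN' : N ≤ 2 ^ k - 1)
    (h : (∏ j ∈ Finset.Icc 1 N, (1 - (2:ℝ) ^ (k - s) / ((2:ℝ) ^ k - (j:ℝ)))) *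
      ((2:ℝ) ^ s - 1) * gaussBinom k s < 1) :
    G1 k s ≤ N ∧ ∃ A : Finset (Fin k → ZMod 2), IsRSSet k s ↑A ∧ A.card = N := by
  have : NeZero s := ⟨by omega⟩
  have hΩ : #(univ.erase (0 : Fin k → ZMod 2)) = 2 ^ k - 1 := by simp [card_erase_of_mem]
  have hevents : ∀ E ∈ (linIndepTuples (ZMod 2) (Fin k) s).image allOnesFiber,
      E ⊆ univ.erase 0 ∧ 2 ^ (k - s) ≤ #E := by
    intro E hE
    obtain ⟨v, hv, rfl⟩ := mem_image.1 hE
    refine ⟨allOnesFiber_subset_erase_zero v, ?_⟩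
    rw [card_allOnesFiber (mem_linIndepTuples.1 hv), ZMod.card, Fintype.card_fin]
  obtain ⟨A, hA, hhit⟩ := exists_mem_powersetCard_forall_inter_nonempty hevents
    (hΩ ▸ card_image_allOnesFiber_mul_choose_lt (by omega) hsk hN' h)
  have hRS : IsRSSet k s A := fun v hv => by
    obtain ⟨c, hc⟩ := hhit _ (mem_image_of_mem _ (mem_linIndepTuples.2 hv))
    obtain ⟨hcA, hcv⟩ := mem_inter.1 hc
    refine ⟨c, hcA, fun j => ?_⟩
    rw [bform, ← dotProduct, dotProduct_comm]
    exact (mem_filter.1 hcv).2 j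
  have hAcard := (mem_powersetCard.1 hA).2
  exact ⟨Nat.sInf_le ⟨A, hRS, hAcard⟩, A, hRS, hAcard⟩

/-- Probabilistic upper bound for `G₁(k,s)`: if
`∏_{j=1}^{N} (1 - 2^(k-s)/(2^k - j)) · (2^s - 1) · [k choose s]₂ < 1`
then there is a `(k,s)`-set of size `N`, so `G₁(k,s) ≤ N`. -/
theorem statement9 (k s N : ℕ) (hs : 2 ≤ s) (hsk : s < k) (hN : 1 ≤ N) (hN' : N ≤ 2 ^ k - 1)
    (h : (∏ j ∈ Finset.Icc 1 N, (1 - (2:ℝ) ^ (k - s) / ((2:ℝ) ^ k - (j:ℝ)))) *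
      ((2:ℝ) ^ s - 1) * gaussBinom k s < 1) :
    G1 k s ≤ N ∧ ∃ A : Finset (Fin k → ZMod 2), IsRSSet k s ↑A ∧ A.card = N :=
  statement9_general k s N hs hsk hN' h
end

section
/- For integers 2 ≤ s < k, G₁(k,s) < ((k−s+1)·s + 2)/(−log(1 − 2^{−s})), where log denotes logarithm to base 2. -/
open Finset

lemma card_fiber_mul_card_of_surjective {G H : Type*} [AddGroup G] [Fintype G] [AddGroup H]
    [Fintype H] [DecidableEq H] {f : G →+ H} (hf : Function.Surjective f) (y : H) :
    #{x | f x = y} * Fintype.card H = Fintype.card G := by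
  calc #{x | f x = y} * Fintype.card H = ∑ z : H, #{x | f x = z} := by
        rw [sum_congr rfl fun z _ => AddMonoidHom.card_fiber_eq_of_mem_range f (hf z) (hf y),
          sum_const, card_univ, smul_eq_mul, mul_comm]
    _ = Fintype.card G := (card_eq_sum_card_fiberwise fun x _ => mem_univ (f x)).symm

lemma Matrix.mulVec_surjective_of_linearIndependent_row {K m n : Type*} [Field K] [Fintype m]
    [Fintype n] {A : Matrix m n K} (hA : LinearIndependent K A.row) :
    Function.Surjective A.mulVec := by
  have hrange : LinearMap.range A.mulVecLin = ⊤ :=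
    Submodule.eq_top_of_finrank_eq <| by
      rw [Module.finrank_fintype_fun_eq_card]; exact hA.rank_matrix
  exact LinearMap.range_eq_top.1 hrange

lemma exists_hitting_set_card_le {α : Type*} [Fintype α] [DecidableEq α]
    (C : Finset (Finset α)) {c m : ℕ} (hC : ∀ B ∈ C, c ≤ #B)
    (h : #C * (Fintype.card α - c) ^ m < Fintype.card α ^ m) :
    ∃ A : Finset α, #A ≤ m ∧ ∀ B ∈ C, ∃ a ∈ A, a ∈ B := by
  set missing := C.biUnion fun B => Fintype.piFinset fun _ : Fin m => Bᶜ
  have hmissing : #missing < #(univ : Finset (Fin m → α)) :=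
    calc #missing ≤ ∑ B ∈ C, #(Fintype.piFinset fun _ : Fin m => Bᶜ) := card_biUnion_le
      _ ≤ ∑ _B ∈ C, (Fintype.card α - c) ^ m := sum_le_sum fun B hB => by
        rw [Fintype.card_piFinset, prod_const, card_compl, card_univ, Fintype.card_fin]
        exact Nat.pow_le_pow_left (Nat.sub_le_sub_left (hC B hB) _) m
      _ < Fintype.card α ^ m := by rwa [sum_const, smul_eq_mul]
      _ = #(univ : Finset (Fin m → α)) := by simp
  obtain ⟨f, -, hf⟩ := exists_mem_notMem_of_card_lt_card hmissing
  refine ⟨univ.image f, card_image_le.trans (by simp), fun B hB => ?_⟩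
  by_contra! hmiss
  exact hf (mem_biUnion.2 ⟨B, hB, Fintype.mem_piFinset.2 fun i =>
    mem_compl.2 (hmiss _ (mem_image_of_mem f (mem_univ i)))⟩)

lemma linearIndependent_cons_add {K V : Type*} [Field K] [AddCommGroup V] [Module K V] {n : ℕ}
    (σ : V →ₗ[K] K) {p : V} (hp : σ p ≠ 0) {e : Fin n → V} (he : LinearIndependent K e)
    (hσe : ∀ t, σ (e t) = 0) :
    LinearIndependent K (Fin.cons p fun t => e t + p : Fin (n + 1) → V) := by
  have hpe : p ∉ Submodule.span K (Set.range e) := fun hmem =>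
    hp (LinearMap.mem_ker.1
      ((Submodule.span_le (p := LinearMap.ker σ)).2 (Set.range_subset_iff.2 hσe) hmem))
  have hcons : LinearIndependent K (Fin.cons p e : Fin (n + 1) → V) :=
    linearIndependent_finCons.2 ⟨he, hpe⟩
  rw [Fintype.linearIndependent_iff] at hcons ⊢
  intro g hg
  have hshear := hcons (Fin.cons (g 0 + ∑ t : Fin n, g t.succ) fun t => g t.succ) (by
    rw [Fin.sum_univ_succ] at hg ⊢
    simpa [smul_add, sum_add_distrib, add_smul, ← sum_smul, add_assoc, add_comm, add_left_comm]
      using hg)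
  have htail : ∀ t : Fin n, g t.succ = 0 := fun t => by simpa using hshear t.succ
  have hhead : g 0 = 0 := by simpa [htail] using hshear 0
  exact fun j => Fin.cases hhead htail j

lemma quarter_add_inv_two_pow_le_prod {m : ℕ} (hm : 1 ≤ m) :
    1 / 4 + ((2 : ℝ) ^ (m + 1))⁻¹ ≤ ∏ j ∈ range m, (1 - ((2 : ℝ) ^ (j + 1))⁻¹) := by
  induction m, hm using Nat.le_induction with
  | base => norm_num
  | succ m hm ih =>
    have ht : ((2 : ℝ) ^ (m + 1))⁻¹ ≤ 1 / 4 := by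
      rw [one_div]
      gcongr
      calc (4 : ℝ) = 2 ^ 2 := by norm_num
        _ ≤ 2 ^ (m + 1) := pow_le_pow_right₀ (by norm_num) (by omega)
    rw [prod_range_succ, pow_succ _ (m + 1), mul_inv]
    have ht0 : (0 : ℝ) < ((2 : ℝ) ^ (m + 1))⁻¹ := by positivity
    nlinarith [mul_le_mul_of_nonneg_right ih (by linarith : 0 ≤ 1 - ((2 : ℝ) ^ (m + 1))⁻¹)]

lemma quarter_lt_prod_one_sub_inv_two_pow (m : ℕ) :
    1 / 4 < ∏ j ∈ range m, (1 - ((2 : ℝ) ^ (j + 1))⁻¹) := by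
  rcases Nat.eq_zero_or_pos m with rfl | hm
  · norm_num
  · exact (lt_add_of_pos_right _ (by positivity)).trans_le (quarter_add_inv_two_pow_le_prod hm)

lemma prod_two_pow_sub_two_pow (n : ℕ) :
    ∏ i : Fin n, ((2 : ℝ) ^ n - 2 ^ (i : ℕ)) =
      2 ^ (n * n) * ∏ j ∈ range n, (1 - ((2 : ℝ) ^ (j + 1))⁻¹) := by
  have hconst : (2 : ℝ) ^ (n * n) = ∏ _j ∈ range n, (2 : ℝ) ^ n := by
    rw [prod_const, card_range, ← pow_mul, mul_comm]
  rw [Fin.prod_univ_eq_prod_range (fun i => (2 : ℝ) ^ n - 2 ^ i), ← prod_range_reflect, hconst,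
    ← prod_mul_distrib]
  refine prod_congr rfl fun j hj => ?_
  have hsplit : (2 : ℝ) ^ n = 2 ^ (n - 1 - j) * 2 ^ (j + 1) := by
    rw [← pow_add]; congr 1; have := mem_range.1 hj; omega
  rw [hsplit, mul_sub, mul_one, mul_assoc, mul_inv_cancel₀ (by positivity), mul_one]

lemma pow_mul_two_rpow_le_one {a y : ℝ} (ha : 0 < a) {j : ℕ} (h : y ≤ j * -Real.logb 2 a) :
    a ^ j * (2 : ℝ) ^ y ≤ 1 := by
  rw [← Real.rpow_logb (by norm_num : (0 : ℝ) < 2) (by norm_num) ha, ← Real.rpow_natCast,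
    ← Real.rpow_mul (by norm_num), ← Real.rpow_add (by norm_num)]
  exact Real.rpow_le_one_of_one_le_of_nonpos (by norm_num) (by linarith)

open Matrix in
lemma bform_eq_mulVec {k n : ℕ} (v : Fin n → Fin k → ZMod 2) (c : Fin k → ZMod 2)
    (j : Fin n) :
    bform c (v j) = (Matrix.of v *ᵥ c) j :=
  dotProduct_comm c (v j)

lemma bform_linearCombination {k n : ℕ} (c : Fin k → ZMod 2) (v : Fin n → Fin k → ZMod 2)
    (x : Fin n → ZMod 2) :
    bform c (Fintype.linearCombination (ZMod 2) v x) = ∑ i, x i * bform c (v i) := by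
  rw [Fintype.linearCombination_apply]
  exact (dotProduct_sum c _ _).trans (sum_congr rfl fun i _ => dotProduct_smul (x i) c (v i))

def levelOneSet {k n : ℕ} (v : Fin n → Fin k → ZMod 2) : Finset (Fin k → ZMod 2) :=
  {c | ∀ j, bform c (v j) = 1}

lemma card_levelOneSet_mul {k n : ℕ} {v : Fin n → Fin k → ZMod 2}
    (hv : LinearIndependent (ZMod 2) v) : #(levelOneSet v) * 2 ^ n = 2 ^ k := by
  have hsurj : Function.Surjective (Matrix.of v).mulVecLin.toAddMonoidHom :=
    Matrix.mulVec_surjective_of_linearIndependent_row hv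
  have h := card_fiber_mul_card_of_surjective hsurj 1
  simp only [Fintype.card_pi, ZMod.card, prod_const, card_univ, Fintype.card_fin] at h
  convert h using 3
  simp [levelOneSet, bform_eq_mulVec, funext_iff]

lemma levelOneSet_subset_levelOneSet_linearCombination {k n m : ℕ}
    (v : Fin n → Fin k → ZMod 2) {M : Fin m → Fin n → ZMod 2}
    (hM : ∀ j, ∑ i, M j i = 1) :
    levelOneSet v ⊆ levelOneSet fun j => Fintype.linearCombination (ZMod 2) v (M j) := by
  intro c hc
  simp only [levelOneSet, mem_filter, mem_univ, true_and] at hc ⊢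
  intro j
  simp [bform_linearCombination, hc, hM]

open Classical in
noncomputable def sumOneBases (s : ℕ) : Finset (Fin s → Fin s → ZMod 2) :=
  {M | LinearIndependent (ZMod 2) M ∧ ∀ j, ∑ i, M j i = 1}

open Classical in
lemma card_sumOneBases_le_card_fiber {k s : ℕ} {v : Fin s → Fin k → ZMod 2}
    (hv : LinearIndependent (ZMod 2) v) :
    #(sumOneBases s) ≤
      #{w ∈ ({w | LinearIndependent (ZMod 2) w} : Finset (Fin s → Fin k → ZMod 2)) |
        levelOneSet w = levelOneSet v} := by
  set L := Fintype.linearCombination (ZMod 2) v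
  have hL : Function.Injective L := hv.fintypeLinearCombination_injective
  refine card_le_card_of_injOn (fun M j => L (M j)) (fun M hM => ?_)
    fun M _ M' _ h => funext fun j => hL (congrFun h j)
  obtain ⟨hMli, hMsum⟩ : LinearIndependent (ZMod 2) M ∧ ∀ j, ∑ i, M j i = 1 := by
    simpa [sumOneBases] using hM
  have hw : LinearIndependent (ZMod 2) fun j => L (M j) :=
    hMli.map' L (LinearMap.ker_eq_bot.2 hL)
  have hsub := levelOneSet_subset_levelOneSet_linearCombination v hMsum
  have hcard : #(levelOneSet fun j => L (M j)) ≤ #(levelOneSet v) := by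
    have h1 := card_levelOneSet_mul hw
    have h2 := card_levelOneSet_mul hv
    exact (Nat.eq_of_mul_eq_mul_right (by positivity) (h1.trans h2.symm)).le
  simp only [coe_filter, mem_filter, mem_univ, true_and]
  exact ⟨hw, (eq_of_subset_of_card_le hsub hcard).symm⟩

lemma pow_mul_prod_le_card_sumOneBases (n : ℕ) :
    2 ^ n * ∏ i : Fin n, (2 ^ n - 2 ^ (i : ℕ)) ≤ #(sumOneBases (n + 1)) := by
  classical
  -- The bases `(p, e₁ + p, …, eₙ + p)` with `σ p = 1` and `e` a basis of `ker σ`.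
  let σ : (Fin (n + 1) → ZMod 2) →ₗ[ZMod 2] ZMod 2 :=
    Fintype.linearCombination (ZMod 2) fun _ => 1
  have hσ : ∀ x, σ x = ∑ i, x i := by simp [σ, Fintype.linearCombination_apply]
  have hσsurj : Function.Surjective σ := fun y => ⟨Pi.single 0 y, by simp [hσ]⟩
  have hker : Module.finrank (ZMod 2) (LinearMap.ker σ) = n := by
    have := LinearMap.finrank_range_add_finrank_ker σ
    rw [LinearMap.range_eq_top.2 hσsurj, finrank_top, Module.finrank_self,
      Module.finrank_fin_fun] at this
    omega
  have hp : #{p | σ p = 1} = 2 ^ n := by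
    have := card_fiber_mul_card_of_surjective (f := σ.toAddMonoidHom) hσsurj 1
    simp only [Fintype.card_pi, ZMod.card, prod_const, card_univ, Fintype.card_fin] at this
    rw [pow_succ] at this
    exact Nat.eq_of_mul_eq_mul_right (by norm_num) this
  have he : #{e : Fin n → LinearMap.ker σ | LinearIndependent (ZMod 2) e} =
      ∏ i : Fin n, (2 ^ n - 2 ^ (i : ℕ)) := by
    rw [← Fintype.card_subtype, ← Nat.card_eq_fintype_card, card_linearIndependent hker.ge,
      ZMod.card, hker]
  rw [← he, ← hp, ← card_product]
  refine card_le_card_of_injOn (fun pe => Fin.cons pe.1 fun t => (pe.2 t : _) + pe.1)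
    (fun pe hpe => ?_) (fun pe _ pe' _ h => ?_)
  · obtain ⟨hp1, hli⟩ : σ pe.1 = 1 ∧ LinearIndependent (ZMod 2) pe.2 := by simpa using hpe
    have hcons := linearIndependent_cons_add σ (p := pe.1) (hp1 ▸ one_ne_zero)
      (hli.map' (LinearMap.ker σ).subtype (LinearMap.ker σ).ker_subtype) fun t => (pe.2 t).2
    simp only [sumOneBases, coe_filter, mem_univ, true_and]
    refine ⟨hcons, fun j => ?_⟩
    rw [← hσ]
    refine Fin.cases ?_ (fun t => ?_) j
    · simpa using hp1
    · simp [hp1, LinearMap.mem_ker.1 (pe.2 t).2]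
  · obtain ⟨hp, he⟩ := Fin.cons_inj.1 h
    refine Prod.ext hp (funext fun t => Subtype.ext ?_)
    simpa [hp] using congrFun he t

open Classical in
noncomputable def levelOneSets (k s : ℕ) : Finset (Finset (Fin k → ZMod 2)) :=
  ({v | LinearIndependent (ZMod 2) v} : Finset (Fin s → Fin k → ZMod 2)).image levelOneSet

lemma card_levelOneSets_mul_le (k n : ℕ) :
    #(levelOneSets k (n + 1)) * (2 ^ n * ∏ i : Fin n, (2 ^ n - 2 ^ (i : ℕ))) ≤
      2 ^ (k * (n + 1)) := by
  classical
  rw [mul_comm]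
  refine (mul_card_image_le_card _ _ fun B hB => ?_).trans ((card_le_univ _).trans ?_)
  · obtain ⟨v, hv, rfl⟩ := mem_image.1 hB
    exact (pow_mul_prod_le_card_sumOneBases n).trans
      (card_sumOneBases_le_card_fiber (by simpa using hv))
  · simp [Fintype.card_pi, pow_mul]

lemma exists_isRSSet_card_le {k s m : ℕ} (hsk : s ≤ k)
    (h : #(levelOneSets k s) * (2 ^ k - 2 ^ (k - s)) ^ m < (2 ^ k) ^ m) :
    ∃ A : Finset (Fin k → ZMod 2), IsRSSet k s A ∧ #A ≤ m := by
  classical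
  have hcard : ∀ B ∈ levelOneSets k s, 2 ^ (k - s) ≤ #B := by
    intro B hB
    obtain ⟨v, hv, rfl⟩ := mem_image.1 hB
    have := card_levelOneSet_mul (by simpa using hv)
    rw [show 2 ^ k = 2 ^ (k - s) * 2 ^ s by rw [← pow_add, Nat.sub_add_cancel hsk]] at this
    exact (Nat.eq_of_mul_eq_mul_right (by positivity) this).ge
  obtain ⟨A, hAm, hA⟩ := exists_hitting_set_card_le (levelOneSets k s) hcard (by simpa using h)
  refine ⟨A, fun v hv => ?_, hAm⟩
  obtain ⟨c, hcA, hc⟩ := hA (levelOneSet v) (mem_image_of_mem _ (by simpa using hv))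
  exact ⟨c, hcA, by simpa [levelOneSet] using hc⟩

lemma mul_prod_one_sub_inv_two_pow_le {N n k : ℕ} (hnk : n ≤ k)
    (hN : N * (2 ^ n * ∏ i : Fin n, (2 ^ n - 2 ^ (i : ℕ))) ≤ 2 ^ (k * (n + 1))) :
    (N : ℝ) * ∏ j ∈ range n, (1 - ((2 : ℝ) ^ (j + 1))⁻¹) ≤
      2 ^ ((k - n) * (n + 1)) := by
  set P := ∏ j ∈ range n, (1 - ((2 : ℝ) ^ (j + 1))⁻¹)
  have hprod : ((∏ i : Fin n, (2 ^ n - 2 ^ (i : ℕ)) : ℕ) : ℝ) = 2 ^ (n * n) * P := by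
    rw [Nat.cast_prod, ← prod_two_pow_sub_two_pow]
    refine prod_congr rfl fun i _ => ?_
    rw [Nat.cast_sub (Nat.pow_le_pow_right two_pos i.2.le)]
    push_cast
    rfl
  have hexp : k * (n + 1) = (k - n) * (n + 1) + (n + n * n) := by
    zify [hnk]; ring
  have hcast := (Nat.cast_le (α := ℝ)).2 hN
  rw [Nat.cast_mul, Nat.cast_mul, hprod, hexp] at hcast
  push_cast at hcast
  refine le_of_mul_le_mul_right (a := 2 ^ n * 2 ^ (n * n)) ?_ (by positivity)
  calc (N : ℝ) * P * (2 ^ n * 2 ^ (n * n)) = N * (2 ^ n * (2 ^ (n * n) * P)) := by ring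
    _ ≤ 2 ^ ((k - n) * (n + 1) + (n + n * n)) := hcast
    _ = 2 ^ ((k - n) * (n + 1)) * (2 ^ n * 2 ^ (n * n)) := by rw [pow_add, pow_add]

lemma card_mul_pow_lt_pow_of_le_mul_neg_logb {N n k m : ℕ} (hnk : n + 1 ≤ k)
    (hN : N * (2 ^ n * ∏ i : Fin n, (2 ^ n - 2 ^ (i : ℕ))) ≤ 2 ^ (k * (n + 1)))
    (hm : ((k : ℝ) - n) * (n + 1) + 2 ≤
      (m + 1 : ℕ) * -Real.logb 2 (1 - ((2 : ℝ) ^ (n + 1))⁻¹)) :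
    N * (2 ^ k - 2 ^ (k - (n + 1))) ^ m < (2 ^ k) ^ m := by
  set a : ℝ := 1 - ((2 : ℝ) ^ (n + 1))⁻¹ with ha
  set P := ∏ j ∈ range n, (1 - ((2 : ℝ) ^ (j + 1))⁻¹)
  set E := (k - n) * (n + 1)
  have ha0 : 0 < a := by
    rw [ha, sub_pos]; exact inv_lt_one_of_one_lt₀ (one_lt_pow₀ one_lt_two (by omega))
  have hPa : 1 / 4 < P * a := by
    have := quarter_lt_prod_one_sub_inv_two_pow (n + 1)
    rwa [prod_range_succ] at this
  have hNP : (N : ℝ) * P ≤ 2 ^ E := mul_prod_one_sub_inv_two_pow_le (by omega) hN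
  have hpow : a ^ (m + 1) * 2 ^ (E + 2) ≤ 1 := by
    have hy : ((k : ℝ) - n) * (n + 1) + 2 = ((E + 2 : ℕ) : ℝ) := by
      simp only [E]; push_cast [Nat.cast_sub (by omega : n ≤ k)]; ring
    have := pow_mul_two_rpow_le_one ha0 (hy ▸ hm)
    rwa [Real.rpow_natCast] at this
  have hlt : (N : ℝ) * a ^ m < 1 := by
    refine lt_of_mul_lt_mul_right (a := P * a) ?_ (by positivity)
    calc (N : ℝ) * a ^ m * (P * a) = (N * P) * a ^ (m + 1) := by ring
      _ ≤ 2 ^ E * a ^ (m + 1) := by gcongr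
      _ = a ^ (m + 1) * 2 ^ (E + 2) / 4 := by ring
      _ ≤ 1 / 4 := by gcongr
      _ < 1 * (P * a) := by rwa [one_mul]
  have hsub : ((2 ^ k - 2 ^ (k - (n + 1)) : ℕ) : ℝ) = 2 ^ k * a := by
    rw [Nat.cast_sub (Nat.pow_le_pow_right two_pos (Nat.sub_le k (n + 1))), ha, mul_sub, mul_one]
    push_cast
    rw [← Nat.sub_add_cancel hnk, pow_add, mul_inv_cancel_right₀ (by positivity),
      Nat.add_sub_cancel]
  rw [← Nat.cast_lt (α := ℝ)]
  push_cast [hsub]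
  rw [mul_pow]
  nlinarith [pow_pos (by norm_num : (0 : ℝ) < 2 ^ k) m]

/-- For `2 ≤ s < k`, `G₁(k,s) < ((k-s+1)·s + 2) / (-log₂(1 - 2^{-s}))`. -/
theorem statement10 (k s : ℕ) (hs : 2 ≤ s) (hsk : s < k) :
    (G1 k s : ℝ) < (((k:ℝ) - s + 1) * s + 2) / (-(Real.logb 2 (1 - ((2:ℝ) ^ s)⁻¹))) := by
  obtain ⟨n, rfl⟩ : ∃ n, s = n + 1 := ⟨s - 1, by omega⟩
  set L := -Real.logb 2 (1 - ((2 : ℝ) ^ (n + 1))⁻¹)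
  have hL : 0 < L := neg_pos.2 (Real.logb_neg one_lt_two (sub_pos.2 (inv_lt_one_of_one_lt₀
    (one_lt_pow₀ one_lt_two n.succ_ne_zero))) (sub_lt_self _ (by positivity)))
  have hE : ((k : ℝ) - (n + 1 : ℕ) + 1) * (n + 1 : ℕ) = ((k : ℝ) - n) * (n + 1) := by
    push_cast; ring
  set x := (((k : ℝ) - (n + 1 : ℕ) + 1) * (n + 1 : ℕ) + 2) / L
  have hk : (n : ℝ) + 1 ≤ k := by exact_mod_cast hsk.le
  have hx : 0 < x := div_pos (by rw [hE]; nlinarith) hL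
  obtain ⟨m, hmx, hxm⟩ : ∃ m : ℕ, (m : ℝ) < x ∧ x ≤ (m + 1 : ℕ) := by
    refine ⟨⌈x⌉₊ - 1, ?_, ?_⟩ <;> push_cast [Nat.sub_add_cancel (Nat.ceil_pos.2 hx),
      Nat.cast_sub (Nat.ceil_pos.2 hx)]
    · linarith [Nat.ceil_lt_add_one hx.le]
    · exact Nat.le_ceil x
  have hmL : ((k : ℝ) - n) * (n + 1) + 2 ≤ (m + 1 : ℕ) * L := by
    rw [← hE, ← div_le_iff₀ hL]; exact hxm
  obtain ⟨A, hA, hAm⟩ := exists_isRSSet_card_le hsk.le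
    (card_mul_pow_lt_pow_of_le_mul_neg_logb hsk.le (card_levelOneSets_mul_le k n) hmL)
  calc (G1 k (n + 1) : ℝ) ≤ #A := Nat.cast_le.2 (Nat.sInf_le ⟨A, hA, rfl⟩)
    _ ≤ m := Nat.cast_le.2 hAm
    _ < x := hmx
end

section
/- For integers 4 ≤ s ≤ k−1, F(k,s) ≥ G(k − ⌈s/2⌉, ⌊s/2⌋). -/
open Matrix Module

lemma exists_eq_single_of_hammingNorm_eq_one {ι : Type*} [Fintype ι] [DecidableEq ι]
    {q : ι → ZMod 2} (hq : hammingNorm q = 1) : ∃ j, q = Pi.single j 1 := by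
  obtain ⟨j, hj⟩ := Finset.card_eq_one.mp hq
  refine ⟨j, funext fun i => ?_⟩
  have hi := Finset.ext_iff.mp hj i
  simp only [Finset.mem_filter, Finset.mem_univ, true_and, Finset.mem_singleton] at hi
  by_cases hij : i = j
  · subst hij
    rw [Pi.single_eq_same]
    exact (by decide : ∀ x : ZMod 2, x ≠ 0 → x = 1) _ (hi.mpr rfl)
  · rw [Pi.single_eq_of_ne hij]
    exact not_not.mp (mt hi.mp hij)

lemma isGenericSet_univ {k s : ℕ} (hs : 0 < s) : IsGenericSet k s Set.univ := by
  intro M hM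
  have hrange : LinearMap.range Mᵀ.mulVecLin = ⊤ :=
    Submodule.eq_top_of_finrank_eq (by
      rw [← Matrix.rank, rank_transpose, hM, finrank_fin_fun])
  obtain ⟨a, ha⟩ : Pi.single ⟨0, hs⟩ 1 ∈ LinearMap.range Mᵀ.mulVecLin := hrange ▸ trivial
  refine ⟨a, trivial, ?_⟩
  rw [← mulVec_transpose, ← mulVecLin_apply, ha]
  simp [hammingNorm, Pi.single_apply, Finset.filter_eq']

lemma Module.exists_dual_ne_zero_of_forall_linearIndependent
    {K V ι : Type*} [Field K] [AddCommGroup V] [Module K V] [FiniteDimensional K V]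
    [Fintype ι] (hι : Fintype.card ι = finrank K V) {P : Set V}
    (hP : ∀ y : ι → V, LinearIndependent K y → ∃ j, y j ∈ P) :
    ∃ φ : Dual K V, φ ≠ 0 ∧ ∀ q, φ q ≠ 0 → q ∈ P := by
  have hspan : Submodule.span K Pᶜ < ⊤ := by
    refine lt_top_iff_ne_top.mpr fun htop => ?_
    let b := Basis.ofSpan htop.ge
    let e := b.indexEquiv ((finBasisOfFinrankEq K V hι.symm).reindex (Fintype.equivFin ι).symm)
    obtain ⟨j, hj⟩ := hP _ (b.reindex e).linearIndependent
    rw [Basis.reindex_apply] at hj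
    exact Basis.ofSpan_subset htop.ge (Set.mem_range_self (e.symm j)) hj
  obtain ⟨φ, hφ0, hφ⟩ := Submodule.exists_le_ker_of_lt_top _ hspan
  exact ⟨φ, hφ0, fun q hq => by_contra fun hqP => hq (hφ (Submodule.subset_span hqP))⟩

lemma LinearMap.exists_apply_sumElim_ne_zero {R M α β : Type*} [Ring R] [AddCommGroup M]
    [Module R M] {φ : (α ⊕ β → R) →ₗ[R] M} (hφ : φ ≠ 0) {x : α → R}
    (hx : ∀ y, φ (Sum.elim x y) = 0) (y : β → R) : ∃ e, φ (Sum.elim e y) ≠ 0 := by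
  have hsplit (e : α → R) (y : β → R) : Sum.elim e y = Sum.elim e 0 + Sum.elim (0 : α → R) y := by
    ext (_ | _) <;> simp
  have hinr : ∀ y, φ (Sum.elim (0 : α → R) y) = 0 := fun y => by
    have : Sum.elim (0 : α → R) y = Sum.elim x y - Sum.elim x 0 := by ext (_ | _) <;> simp
    rw [this, map_sub, hx, hx, sub_zero]
  obtain ⟨q, hq⟩ := DFunLike.ne_iff.mp hφ
  refine ⟨q ∘ Sum.inl, ?_⟩
  rw [← Sum.elim_comp_inl_inr q, hsplit, map_add, hinr, add_zero] at hq
  rwa [hsplit, map_add, hinr, add_zero]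

lemma exists_linearEquiv_prod_apply_single {K V W : Type*} [Field K] [AddCommGroup V]
    [Module K V] [FiniteDimensional K V] [AddCommGroup W] [Module K W] [FiniteDimensional K W]
    {t : ℕ} {v : Fin t → V} (hv : LinearIndependent K v)
    (hdim : finrank K V = t + finrank K W) :
    ∃ E : ((Fin t → K) × W) ≃ₗ[K] V, ∀ j, E (Pi.single j 1, 0) = v j := by
  obtain ⟨Z, hZ⟩ := (Submodule.span K (Set.range v)).exists_isCompl
  have hZdim : finrank K W = finrank K Z := by
    have := Submodule.finrank_add_eq_of_isCompl hZ
    rw [finrank_span_eq_card hv, Fintype.card_fin] at this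
    omega
  refine ⟨((Basis.span hv).equivFun.symm.prodCongr (LinearEquiv.ofFinrankEq _ _ hZdim)) ≪≫ₗ
    Submodule.prodEquivOfIsCompl _ _ hZ, fun j => ?_⟩
  simp [Basis.span_apply]

lemma exists_linearMap_linearIndependent_sumElim {K V : Type*} [Field K] [AddCommGroup V]
    [Module K V] [FiniteDimensional K V] {t r m : ℕ} {v : Fin t → V}
    (hv : LinearIndependent K v) (hdim : finrank K V = t + (r + m)) :
    ∃ (L : (Fin r → K) →ₗ[K] V) (pad : Fin m → V), ∀ w : Fin t → Fin r → K,
      LinearIndependent K w → LinearIndependent K (Sum.elim v (Sum.elim (L ∘ w) pad)) := by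
  obtain ⟨E, hE⟩ := exists_linearEquiv_prod_apply_single hv
    (W := (Fin r → K) × (Fin m → K)) (by simpa using hdim)
  refine ⟨E.toLinearMap ∘ₗ LinearMap.inr K _ _ ∘ₗ LinearMap.inl K _ _,
    fun i => E (0, (0, Pi.single i 1)), fun w hw => ?_⟩
  have hindep : LinearIndependent K (E ∘ _) :=
    (linearIndependent_inl_union_inr' (Pi.linearIndependent_single_one (Fin t) K)
      (linearIndependent_inl_union_inr' hw (Pi.linearIndependent_single_one (Fin m) K))).map'
      E.toLinearMap E.ker
  convert hindep using 1
  ext (j | j | i) <;> simp [hE]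

def bformImage {k : ℕ} {ι : Type*} (A : Set (Fin k → ZMod 2)) (h : ι → Fin k → ZMod 2) :
    Set (ι → ZMod 2) :=
  {q | ∃ a ∈ A, ∀ i, bform a (h i) = q i}

lemma bform_eq_dotProduct_s12 {k : ℕ} (a v : Fin k → ZMod 2) : bform a v = a ⬝ᵥ v := rfl

lemma bform_vecMul_toMatrix' {k r : ℕ} (L : (Fin r → ZMod 2) →ₗ[ZMod 2] Fin k → ZMod 2)
    (a : Fin k → ZMod 2) (w : Fin r → ZMod 2) :
    bform (a ᵥ* LinearMap.toMatrix' L) w = bform a (L w) := by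
  rw [bform_eq_dotProduct_s12, bform_eq_dotProduct_s12, ← dotProduct_mulVec, LinearMap.toMatrix'_mulVec]

lemma IsGenericSet.exists_mem_bformImage {k s : ℕ} {A : Set (Fin k → ZMod 2)}
    (hA : IsGenericSet k s A) {h : Fin s → Fin k → ZMod 2} (hh : LinearIndependent (ZMod 2) h)
    {y : Fin s → Fin s → ZMod 2} (hy : LinearIndependent (ZMod 2) y) :
    ∃ j, y j ∈ bformImage A h := by
  have hY : IsUnit (Matrix.of y).det :=
    (isUnit_iff_isUnit_det _).mp (linearIndependent_rows_iff_isUnit.mp hy)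
  obtain ⟨a, ha, hwt⟩ := hA ((Matrix.of h)ᵀ * (Matrix.of y)⁻¹) (by
    rw [rank_mul_eq_left_of_isUnit_det _ _ (isUnit_nonsing_inv_det _ hY), rank_transpose,
      LinearIndependent.rank_matrix (M := Matrix.of h) hh, Fintype.card_fin])
  obtain ⟨j, hj⟩ := exists_eq_single_of_hammingNorm_eq_one hwt
  have hpattern : a ᵥ* (Matrix.of h)ᵀ = y j := by
    change _ = (Matrix.of y).row j
    rw [← single_one_vecMul, ← hj, vecMul_vecMul,
      Matrix.mul_assoc, nonsing_inv_mul _ hY, Matrix.mul_one]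
  refine ⟨j, a, ha, fun i => ?_⟩
  rw [← hpattern, vecMul_transpose, bform_eq_dotProduct_s12, dotProduct_comm]
  rfl

lemma IsGenericSet.exists_dual {k s : ℕ} {A : Set (Fin k → ZMod 2)} (hA : IsGenericSet k s A)
    {ι : Type*} [Fintype ι] (hι : Fintype.card ι = s) {h : ι → Fin k → ZMod 2}
    (hh : LinearIndependent (ZMod 2) h) :
    ∃ φ : Dual (ZMod 2) (ι → ZMod 2), φ ≠ 0 ∧ ∀ q, φ q ≠ 0 → q ∈ bformImage A h := by
  let e : ι ≃ Fin s := Fintype.equivFinOfCardEq hι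
  refine exists_dual_ne_zero_of_forall_linearIndependent (ι := Fin s) (by simp [hι])
    fun y hy => ?_
  let reindex := LinearEquiv.funCongrLeft (ZMod 2) (ZMod 2) e.symm
  obtain ⟨j, a, ha, hpattern⟩ := hA.exists_mem_bformImage (hh.comp e.symm e.symm.injective)
    (hy.map' reindex.toLinearMap reindex.ker)
  refine ⟨j, a, ha, fun i => ?_⟩
  simpa [reindex] using hpattern (e i)

lemma IsGoodSet.image_vecMul_toMatrix' {k r t : ℕ} {A : Set (Fin k → ZMod 2)}
    (hA : IsGoodSet k t A) {L : (Fin r → ZMod 2) →ₗ[ZMod 2] Fin k → ZMod 2}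
    (hL : Function.Injective L) : IsGoodSet r t ((· ᵥ* LinearMap.toMatrix' L) '' A) := by
  intro w hw x
  obtain ⟨a, ha, hax⟩ := hA _ (hw.map' L (LinearMap.ker_eq_bot.mpr hL)) x
  exact ⟨_, Set.mem_image_of_mem _ ha, fun j => (bform_vecMul_toMatrix' L a (w j)).trans (hax j)⟩

lemma IsGenericSet.isGoodSet_image_vecMul_toMatrix' {k r s t m : ℕ} {A : Set (Fin k → ZMod 2)}
    (hA : IsGenericSet k s A) (hs : t + (t + m) = s) {v : Fin t → Fin k → ZMod 2}
    {x : Fin t → ZMod 2} (hx : x ∉ bformImage A v)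
    {L : (Fin r → ZMod 2) →ₗ[ZMod 2] Fin k → ZMod 2} {pad : Fin m → Fin k → ZMod 2}
    (hL : ∀ w : Fin t → Fin r → ZMod 2, LinearIndependent (ZMod 2) w →
      LinearIndependent (ZMod 2) (Sum.elim v (Sum.elim (L ∘ w) pad))) :
    IsGoodSet r t ((· ᵥ* LinearMap.toMatrix' L) '' A) := by
  intro w hw x'
  obtain ⟨φ, hφ0, hφ⟩ := hA.exists_dual (by simp [hs]) (hL w hw)
  have hφx : ∀ y, φ (Sum.elim x y) = 0 := fun y => by
    by_contra hne
    obtain ⟨a, ha, hay⟩ := hφ _ hne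
    exact hx ⟨a, ha, fun j => by simpa using hay (Sum.inl j)⟩
  obtain ⟨e, he⟩ := φ.exists_apply_sumElim_ne_zero hφ0 hφx (Sum.elim x' 0)
  obtain ⟨a, ha, hae⟩ := hφ _ he
  refine ⟨_, Set.mem_image_of_mem _ ha, fun j => ?_⟩
  rw [bform_vecMul_toMatrix']
  simpa using hae (Sum.inr (Sum.inl j))

lemma IsGenericSet.exists_isGoodSet_card_le {k r s t m : ℕ} {A : Finset (Fin k → ZMod 2)}
    (hA : IsGenericSet k s A) (hs : t + (t + m) = s) (hk : t + (r + m) = k) :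
    ∃ B : Finset (Fin r → ZMod 2), IsGoodSet r t B ∧ B.card ≤ A.card := by
  suffices ∃ L : (Fin r → ZMod 2) →ₗ[ZMod 2] Fin k → ZMod 2,
      IsGoodSet r t ((· ᵥ* LinearMap.toMatrix' L) '' A) by
    obtain ⟨L, hL⟩ := this
    exact ⟨A.image (· ᵥ* LinearMap.toMatrix' L), by rwa [Finset.coe_image], Finset.card_image_le⟩
  by_cases hgood : IsGoodSet k t A
  · obtain ⟨L, hL⟩ := finrank_le_iff_exists_linearMap.mp
      (by simp only [finrank_fin_fun]; omega :
        finrank (ZMod 2) (Fin r → ZMod 2) ≤ finrank (ZMod 2) (Fin k → ZMod 2))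
    exact ⟨L, hgood.image_vecMul_toMatrix' hL⟩
  · obtain ⟨v, hv, x, hx⟩ : ∃ v, LinearIndependent (ZMod 2) v ∧
        ∃ x, x ∉ bformImage (A : Set (Fin k → ZMod 2)) v := by
      simpa [IsGoodSet, bformImage] using hgood
    obtain ⟨L, pad, hL⟩ :=
      exists_linearMap_linearIndependent_sumElim (r := r) (m := m) hv (by simp [hk])
    exact ⟨L, hA.isGoodSet_image_vecMul_toMatrix' hs hx hL⟩

/-- For `4 ≤ s ≤ k-1`, `F(k,s) ≥ G(k - ⌈s/2⌉, ⌊s/2⌋)`. -/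
theorem statement12 (k s : ℕ) (hs : 4 ≤ s) (hsk : s ≤ k - 1) :
    Ggood (k - (s + 1) / 2) (s / 2) ≤ Fgen k s := by
  obtain ⟨A, hA, hAcard⟩ : Fgen k s ∈
      {n | ∃ A : Finset (Fin k → ZMod 2), IsGenericSet k s ↑A ∧ A.card = n} :=
    Nat.sInf_mem ⟨_, Finset.univ, by simpa using isGenericSet_univ (by omega), rfl⟩
  obtain ⟨B, hB, hBcard⟩ := hA.exists_isGoodSet_card_le (t := s / 2) (m := (s + 1) / 2 - s / 2)
    (r := k - (s + 1) / 2) (by omega) (by omega)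
  calc Ggood (k - (s + 1) / 2) (s / 2) ≤ B.card := Nat.sInf_le ⟨B, hB, rfl⟩
    _ ≤ A.card := hBcard
    _ = Fgen k s := hAcard
end

section
/- Let 2 ≤ s < k be integers and let N be a positive integer with N ≤ 2^k − 1. If ∏_{j=1}^{N} (1 − s·2^{k−s}/(2^k − j)) · (1/s!)·∏_{i=0}^{s−1} (2^s − 2^i) · [k choose s]₂ < 1, then F(k,s) ≤ N, i.e., there exists a generic (k,s)-set of cardinality N. -/
/-! Choose `N` distinct nonzero vectors of `F₂^k` at random. A vector `a` works for a rank-`s`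
matrix `M` iff it is isolating for the set of columns of `M` (`a ⬝ᵥ x ≠ 0` for exactly one
column `x`); as `a ↦ a ᵥ* M` maps onto `F₂^s`, exactly `s·2^(k-s)` vectors do. The product in
the hypothesis is the probability `C(2^k-1-s·2^(k-s), N) / C(2^k-1, N)` that the random set
misses them all, and there are at most `∏ (2^k - 2^i) / s! = (1/s!)·∏ (2^s - 2^i)·[k choose s]₂`
column sets, so by the union bound some choice works for every matrix. -/

open Finset Matrix
open scoped Nat

theorem AddMonoidHom.card_preimage_mul_card_of_surjective {G H : Type*} [AddGroup G]
    [AddMonoid H] [Fintype G] [Fintype H] [DecidableEq H] {f : G →+ H}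
    (hf : Function.Surjective f) (S : Finset H) :
    #{g | f g ∈ S} * Fintype.card H = #S * Fintype.card G := by
  have hfiber (y : H) : #{g | f g = y} * Fintype.card H = Fintype.card G := by
    have := card_eq_sum_card_fiberwise (f := f) (s := univ) (t := univ) (by simp)
    rw [sum_congr rfl fun z _ => AddMonoidHom.card_fiber_eq_of_mem_range f (hf z) (hf y),
      sum_const, card_univ, card_univ, smul_eq_mul] at this
    rw [this, mul_comm]
  rw [card_eq_sum_card_fiberwise (f := f) (t := S) fun g hg => by simpa using hg, sum_mul,
    sum_congr rfl fun y hy => ?_, sum_const, smul_eq_mul]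
  rw [filter_filter, ← hfiber y]
  congr 2
  ext g
  simp only [mem_filter, mem_univ, true_and, and_iff_right_iff_imp]
  rintro rfl
  exact hy

theorem card_hammingNorm_eq_one {ι K : Type*} [Fintype ι] [DecidableEq ι] [Fintype K]
    [DecidableEq K] [Zero K] :
    #{y : ι → K | hammingNorm y = 1} = Fintype.card ι * (Fintype.card K - 1) := by
  have himage : ({y : ι → K | hammingNorm y = 1} : Finset _) =
      (univ ×ˢ univ.erase 0).image fun p : ι × K => Pi.single p.1 p.2 := by
    ext y
    simp only [mem_filter, mem_univ, true_and, mem_image, mem_product, mem_erase, and_true,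
      Prod.exists]
    constructor
    · intro hy
      obtain ⟨j, hj⟩ := card_eq_one.1 hy
      have hsupp (i : ι) : y i ≠ 0 ↔ i = j := by simpa using congrArg (i ∈ ·) hj
      refine ⟨j, y j, (hsupp j).2 rfl, funext fun i => ?_⟩
      by_cases hi : i = j
      · subst hi; simp
      · simp [hi, not_not.1 (mt (hsupp i).1 hi)]
    · rintro ⟨j, c, hc, rfl⟩
      rw [hammingNorm, card_eq_one]
      exact ⟨j, by ext i; by_cases hi : i = j <;> simp [hi, hc]⟩
  rw [himage, card_image_of_injOn, card_product, card_univ, card_erase_of_mem (mem_univ _),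
    card_univ]
  rintro ⟨j, c⟩ hjc ⟨j', c'⟩ _ h
  have hc : c ≠ 0 := by simpa using hjc
  have hj : j = j' := by
    by_contra hne
    exact hc (by simpa [Pi.single_apply, hne] using congrFun h j)
  subst hj
  exact Prod.ext rfl (Pi.single_injective j h)

theorem exists_subset_card_eq_forall_not_disjoint {α β : Type*} [DecidableEq α] {X : Finset α}
    {𝒯 : Finset β} {G : β → Finset α} {m N : ℕ} (hG : ∀ T ∈ 𝒯, #(X \ G T) ≤ m)
    (hlt : #𝒯 * m.choose N < (#X).choose N) :
    ∃ A ⊆ X, #A = N ∧ ∀ T ∈ 𝒯, ¬Disjoint A (G T) := by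
  by_contra! hbad
  have hcover : powersetCard N X ⊆ 𝒯.biUnion fun T => powersetCard N (X \ G T) := by
    intro A hA
    obtain ⟨hAX, hAcard⟩ := mem_powersetCard.1 hA
    obtain ⟨T, hT, hdisj⟩ := hbad A hAX hAcard
    exact mem_biUnion.2 ⟨T, hT, mem_powersetCard.2 ⟨subset_sdiff.2 ⟨hAX, hdisj⟩, hAcard⟩⟩
  refine hlt.not_ge ?_
  calc (#X).choose N = #(powersetCard N X) := (card_powersetCard N X).symm
    _ ≤ ∑ T ∈ 𝒯, #(powersetCard N (X \ G T)) := (card_le_card hcover).trans card_biUnion_le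
    _ ≤ ∑ _T ∈ 𝒯, m.choose N := sum_le_sum fun T hT => by
      rw [card_powersetCard]; exact Nat.choose_le_choose N (hG T hT)
    _ = #𝒯 * m.choose N := by rw [sum_const, smul_eq_mul]

theorem prod_Icc_one_sub_div_eq {n g N : ℕ} (hg : g < n) (hN : N < n) :
    ∏ j ∈ Icc 1 N, (1 - (g : ℝ) / (n - j)) = ((n - 1 - g).choose N : ℝ) / (n - 1).choose N := by
  have hfactor : ∀ i ∈ range N,
      1 - (g : ℝ) / (n - ↑(1 + i)) = (↑(n - 1 - g) - i) / (↑(n - 1) - i) := by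
    intro i hi
    have hi : i + 1 < n := by rw [mem_range] at hi; omega
    have hne : (n : ℝ) - 1 - i ≠ 0 := by
      rw [sub_sub, sub_ne_zero]; exact_mod_cast (by omega : n ≠ 1 + i)
    rw [Nat.cast_sub (by omega), Nat.cast_sub (by omega), Nat.cast_add, Nat.cast_one, ← sub_sub,
      eq_div_iff hne, sub_mul, div_mul_cancel₀ _ hne]
    ring
  rw [← Ico_add_one_right_eq_Icc, prod_Ico_eq_prod_range, Nat.add_sub_cancel,
    prod_congr rfl hfactor, prod_div_distrib, ← descPochhammer_eval_eq_prod_range,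
    ← descPochhammer_eval_eq_prod_range, descPochhammer_eval_eq_descFactorial,
    descPochhammer_eval_eq_descFactorial, Nat.descFactorial_eq_factorial_mul_choose,
    Nat.descFactorial_eq_factorial_mul_choose]
  push_cast
  rw [mul_div_mul_left _ _ (by positivity)]

section FullRank

variable {m n K : Type*} [Fintype m] [Fintype n] [Field K]

theorem Matrix.linearIndependent_col_iff_rank_eq (M : Matrix m n K) :
    LinearIndependent K M.col ↔ M.rank = Fintype.card n := by
  refine ⟨fun h => ?_, fun h => ?_⟩
  · rw [← rank_transpose]
    exact LinearIndependent.rank_matrix (M := Mᵀ) h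
  · rw [linearIndependent_iff_card_eq_finrank_span, ← h, rank_eq_finrank_span_cols]
    rfl

theorem Matrix.vecMulLinear_surjective_of_rank_eq (M : Matrix m n K)
    (h : M.rank = Fintype.card n) : Function.Surjective M.vecMulLinear := by
  have : Function.Surjective Mᵀ.mulVecLin := by
    rw [← LinearMap.range_eq_top]
    apply Submodule.eq_top_of_finrank_eq
    rw [← Matrix.rank, rank_transpose, h, Module.finrank_fintype_fun_eq_card]
  simpa [mulVec_transpose] using this

theorem Matrix.card_filter_rank_eq {s : ℕ} [Fintype K] [DecidableEq K] [DecidableEq m]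
    (hs : s ≤ Fintype.card m) :
    #{M : Matrix m (Fin s) K | M.rank = s} =
      ∏ i : Fin s, (Fintype.card K ^ Fintype.card m - Fintype.card K ^ (i : ℕ)) := by
  have hs' : s ≤ Module.finrank K (m → K) := by simpa using hs
  rw [← Module.finrank_fintype_fun_eq_card (R := K) (η := m), ← card_linearIndependent hs',
    ← Fintype.card_subtype, ← Nat.card_eq_fintype_card]
  exact Nat.card_congr <| (transposeAddEquiv m (Fin s) K).toEquiv.subtypeEquiv
    fun M => ((linearIndependent_col_iff_rank_eq M).trans (by rw [Fintype.card_fin])).symm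

def isolatingVectors [DecidableEq m] [DecidableEq K] [Fintype K] (T : Finset (m → K)) :
    Finset (m → K) :=
  {a | #{x ∈ T | a ⬝ᵥ x ≠ 0} = 1}

theorem isolatingVectors_subset_erase_zero [DecidableEq m] [DecidableEq K] [Fintype K]
    (T : Finset (m → K)) : isolatingVectors T ⊆ univ.erase 0 :=
  fun a ha => mem_erase.2 ⟨by rintro rfl; simp [isolatingVectors] at ha, mem_univ a⟩

theorem hammingNorm_vecMul_eq_card [DecidableEq K] (M : Matrix m n K)
    (hM : Function.Injective M.col) (a : m → K) :
    hammingNorm (a ᵥ* M) = #{x ∈ univ.image M.col | a ⬝ᵥ x ≠ 0} := by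
  rw [filter_image, card_image_of_injective _ hM]
  rfl

theorem card_isolatingVectors_image_col_mul [Fintype K] [DecidableEq m] [DecidableEq n]
    [DecidableEq K] (M : Matrix m n K) (h : M.rank = Fintype.card n) :
    #(isolatingVectors (univ.image M.col)) * Fintype.card K ^ Fintype.card n =
      Fintype.card n * (Fintype.card K - 1) * Fintype.card K ^ Fintype.card m := by
  have hinj := ((linearIndependent_col_iff_rank_eq M).2 h).injective
  have key := AddMonoidHom.card_preimage_mul_card_of_surjective
    (f := M.vecMulLinear.toAddMonoidHom) (vecMulLinear_surjective_of_rank_eq M h)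
    {y | hammingNorm y = 1}
  simp only [Fintype.card_fun, card_hammingNorm_eq_one] at key
  convert key using 3
  ext a
  simp [isolatingVectors, hammingNorm_vecMul_eq_card M hinj]

variable (m K) in
noncomputable def fullRankColumnSets [DecidableEq m] [Fintype K] [DecidableEq K] (s : ℕ) :
    Finset (Finset (m → K)) :=
  ({M : Matrix m (Fin s) K | M.rank = s} : Finset _).image fun M => univ.image M.col

theorem factorial_mul_card_fullRankColumnSets_le [DecidableEq m] [Fintype K] [DecidableEq K]
    (s : ℕ) : s ! * #(fullRankColumnSets m K s) ≤ #{M : Matrix m (Fin s) K | M.rank = s} := by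
  refine mul_card_image_le_card _ _ fun T hT => ?_
  obtain ⟨M, hM, rfl⟩ := mem_image.1 hT
  replace hM : M.rank = s := (mem_filter.1 hM).2
  have hinj : Function.Injective M.col :=
    ((linearIndependent_col_iff_rank_eq M).2 (by simpa using hM)).injective
  calc s ! = #(univ : Finset (Equiv.Perm (Fin s))) := by simp [Fintype.card_perm]
    _ = #(univ.image fun σ : Equiv.Perm (Fin s) => M.submatrix (Equiv.refl m) σ) :=
      (card_image_of_injective _ fun σ τ hστ => Equiv.ext fun i =>
        hinj (congrArg (fun N : Matrix m (Fin s) K => N.col i) hστ)).symm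
    _ ≤ _ := card_le_card fun N hN => ?_
  obtain ⟨σ, -, rfl⟩ := mem_image.1 hN
  refine mem_filter.2
    ⟨mem_filter.2 ⟨mem_univ _, (rank_submatrix M (Equiv.refl m) σ).trans hM⟩, ?_⟩
  change univ.image (M.col ∘ σ) = univ.image M.col
  rw [← image_image, image_univ_equiv]

end FullRank

theorem isGenericSet_of_forall_not_disjoint {r s : ℕ} {A : Finset (Fin r → ZMod 2)}
    (hA : ∀ T ∈ fullRankColumnSets (Fin r) (ZMod 2) s, ¬Disjoint A (isolatingVectors T)) :
    IsGenericSet r s A := by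
  intro M hM
  obtain ⟨a, haA, ha⟩ :=
    not_disjoint_iff.1 (hA _ (mem_image_of_mem _ (mem_filter.2 ⟨mem_univ _, hM⟩)))
  refine ⟨a, haA, ?_⟩
  rw [hammingNorm_vecMul_eq_card M
    ((linearIndependent_col_iff_rank_eq M).2 (by simpa using hM)).injective]
  exact (mem_filter.1 ha).2

theorem card_isolatingVectors_of_mem_fullRankColumnSets {k s : ℕ} (hsk : s ≤ k)
    {T : Finset (Fin k → ZMod 2)} (hT : T ∈ fullRankColumnSets (Fin k) (ZMod 2) s) :
    #(isolatingVectors T) = s * 2 ^ (k - s) := by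
  obtain ⟨M, hM, rfl⟩ := mem_image.1 hT
  have hcard := card_isolatingVectors_image_col_mul M (by simpa using (mem_filter.1 hM).2)
  simp only [ZMod.card, Fintype.card_fin] at hcard
  apply Nat.eq_of_mul_eq_mul_right (pow_pos two_pos s)
  rw [hcard, mul_assoc s (2 ^ (k - s)), ← pow_add, Nat.sub_add_cancel hsk, Nat.add_one_sub_one,
    mul_one]

theorem prod_two_pow_sub_mul_gaussBinom {k s : ℕ} (hsk : s ≤ k) :
    (∏ i ∈ range s, ((2 : ℝ) ^ s - 2 ^ i)) * gaussBinom k s =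
      ∏ i ∈ range s, ((2 : ℝ) ^ k - 2 ^ i) := by
  rw [gaussBinom, ← prod_mul_distrib]
  refine prod_congr rfl fun i hi => ?_
  have hi : i < s := mem_range.1 hi
  have hne : (2 : ℝ) ^ (s - i) - 1 ≠ 0 := by
    have : (2 : ℝ) ≤ 2 ^ (s - i) := le_self_pow₀ one_le_two (by omega)
    linarith
  obtain ⟨a, rfl⟩ : ∃ a, s = i + a := ⟨s - i, by omega⟩
  obtain ⟨b, rfl⟩ : ∃ b, k = i + b := ⟨k - i, by omega⟩
  simp only [Nat.add_sub_cancel_left, pow_add] at hne ⊢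
  field_simp

theorem card_fullRankColumnSets_le {k s : ℕ} (hsk : s ≤ k) :
    (#(fullRankColumnSets (Fin k) (ZMod 2) s) : ℝ) ≤
      (1 / s ! * ∏ i ∈ range s, ((2 : ℝ) ^ s - 2 ^ i)) * gaussBinom k s := by
  have hnat := (factorial_mul_card_fullRankColumnSets_le s).trans_eq
    (card_filter_rank_eq (K := ZMod 2) (m := Fin k) (by simpa using hsk))
  simp only [ZMod.card, Fintype.card_fin, Fin.prod_univ_eq_prod_range (fun i => 2 ^ k - 2 ^ i)]
    at hnat
  have hcast : ((∏ i ∈ range s, (2 ^ k - 2 ^ i) : ℕ) : ℝ) =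
      ∏ i ∈ range s, ((2 : ℝ) ^ k - 2 ^ i) := by
    rw [Nat.cast_prod]
    refine prod_congr rfl fun i hi => ?_
    rw [Nat.cast_sub (Nat.pow_le_pow_right two_pos (by simp at hi; omega))]
    push_cast; rfl
  rw [mul_assoc, prod_two_pow_sub_mul_gaussBinom hsk, one_div, inv_mul_eq_div,
    le_div_iff₀ (by positivity), mul_comm, ← hcast]
  exact_mod_cast hnat

theorem statement13_general (k s N : ℕ) (hsk : s < k) (hN' : N ≤ 2 ^ k - 1)
    (h : (∏ j ∈ Finset.Icc 1 N, (1 - (s:ℝ) * (2:ℝ) ^ (k - s) / ((2:ℝ) ^ k - (j:ℝ)))) *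
      ((1 / (Nat.factorial s : ℝ)) * ∏ i ∈ Finset.range s, ((2:ℝ) ^ s - (2:ℝ) ^ i)) *
      gaussBinom k s < 1) :
    Fgen k s ≤ N ∧ ∃ A : Finset (Fin k → ZMod 2), IsGenericSet k s ↑A ∧ A.card = N := by
  set 𝒯 := fullRankColumnSets (Fin k) (ZMod 2) s
  have hg : s * 2 ^ (k - s) < 2 ^ k :=
    calc s * 2 ^ (k - s) < 2 ^ s * 2 ^ (k - s) := by gcongr; exact Nat.lt_two_pow_self
      _ = 2 ^ k := by rw [← pow_add, Nat.add_sub_cancel' hsk.le]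
  have hprod := prod_Icc_one_sub_div_eq hg (hN'.trans_lt (Nat.sub_lt (Nat.two_pow_pos k) one_pos))
  push_cast at hprod
  rw [hprod, mul_assoc, div_mul_eq_mul_div, div_lt_one (by exact_mod_cast Nat.choose_pos hN')] at h
  have hlt : #𝒯 * (2 ^ k - 1 - s * 2 ^ (k - s)).choose N < (2 ^ k - 1).choose N := by
    have := (mul_le_mul_of_nonneg_left (card_fullRankColumnSets_le hsk.le)
      (Nat.cast_nonneg _)).trans_lt h
    rw [mul_comm] at this
    exact_mod_cast this
  have hmiss (T) (hT : T ∈ 𝒯) :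
      #((univ.erase 0) \ isolatingVectors T) ≤ 2 ^ k - 1 - s * 2 ^ (k - s) := by
    rw [card_sdiff_of_subset (isolatingVectors_subset_erase_zero T),
      card_isolatingVectors_of_mem_fullRankColumnSets hsk.le hT]
    simp only [card_erase_of_mem (mem_univ _), card_univ, Fintype.card_fun, ZMod.card,
      Fintype.card_fin, le_refl]
  obtain ⟨A, -, hAcard, hA⟩ := exists_subset_card_eq_forall_not_disjoint hmiss (by simpa using hlt)
  have hgen := isGenericSet_of_forall_not_disjoint hA
  exact ⟨Nat.sInf_le ⟨A, hgen, hAcard⟩, A, hgen, hAcard⟩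

/-- Probabilistic upper bound for `F(k,s)`: if
`∏_{j=1}^{N} (1 - s·2^(k-s)/(2^k - j)) · (1/s!)·∏_{i=0}^{s-1}(2^s - 2^i) · [k choose s]₂ < 1`
then there is a generic `(k,s)`-set of size `N`, so `F(k,s) ≤ N`. -/
theorem statement13 (k s N : ℕ) (hs : 2 ≤ s) (hsk : s < k) (hN : 1 ≤ N) (hN' : N ≤ 2 ^ k - 1)
    (h : (∏ j ∈ Finset.Icc 1 N, (1 - (s:ℝ) * (2:ℝ) ^ (k - s) / ((2:ℝ) ^ k - (j:ℝ)))) *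
      ((1 / (Nat.factorial s : ℝ)) * ∏ i ∈ Finset.range s, ((2:ℝ) ^ s - (2:ℝ) ^ i)) *
      gaussBinom k s < 1) :
    Fgen k s ≤ N ∧ ∃ A : Finset (Fin k → ZMod 2), IsGenericSet k s ↑A ∧ A.card = N :=
  statement13_general k s N hsk hN' h
end

section
/- Let 1 ≤ s ≤ r be integers and let A ⊆ F₂^r. If for every (r−s)-dimensional linear subspace V of F₂^r there exists an s-dimensional linear subspace U of F₂^r with U ⊆ A and V ∩ U = {0}, then A is an (r,s)-set. -/
/-- If for every `(r-s)`-dimensional subspace `V` of `F₂^r` there is an `s`-dimensional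
subspace `U ⊆ A` with `V ∩ U = {0}`, then `A` is an `(r,s)`-set. -/
theorem statement16 (r s : ℕ) (hs : 1 ≤ s) (hsr : s ≤ r) (A : Set (Fin r → ZMod 2))
    (h : ∀ V : Submodule (ZMod 2) (Fin r → ZMod 2), Module.finrank (ZMod 2) V = r - s →
      ∃ U : Submodule (ZMod 2) (Fin r → ZMod 2), Module.finrank (ZMod 2) U = s ∧
        (U : Set (Fin r → ZMod 2)) ⊆ A ∧ V ⊓ U = ⊥) :
    IsRSSet r s A := by
  intro v hv
  -- the matrix with rows v j
  set M : Matrix (Fin s) (Fin r) (ZMod 2) := Matrix.of v with hM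
  -- φ x j = bform x (v j)
  set φ : (Fin r → ZMod 2) →ₗ[ZMod 2] (Fin s → ZMod 2) := Matrix.mulVecLin M with hφ
  have hφ_apply : ∀ x j, φ x j = bform x (v j) := by
    intro x j
    simp only [hφ, Matrix.mulVecLin_apply, Matrix.mulVec, dotProduct, bform]
    exact Finset.sum_congr rfl fun i _ => mul_comm _ _
  -- M.transpose has injective mulVec since rows of M are linearly independent
  have hinj : Function.Injective (Matrix.mulVecLin M.transpose) := by
    have : Function.Injective M.vecMul := Matrix.vecMul_injective_iff.mpr hv
    intro x y hxy
    apply this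
    simpa [Matrix.mulVec_transpose] using hxy
  have hrankT : M.transpose.rank = s := by
    unfold Matrix.rank
    rw [LinearMap.finrank_range_of_inj hinj]
    simp
  have hrangeφ : Module.finrank (ZMod 2) (LinearMap.range φ) = s := by
    have := M.rank_transpose
    rw [hrankT] at this
    exact this.symm
  have hkerφ : Module.finrank (ZMod 2) (LinearMap.ker φ) = r - s := by
    have := LinearMap.finrank_range_add_finrank_ker φ
    rw [hrangeφ] at this
    simp only [Module.finrank_fintype_fun_eq_card, Fintype.card_fin] at this
    omega
  obtain ⟨U, hU, hUA, hdisj⟩ := h (LinearMap.ker φ) hkerφ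
  -- restrict φ to U
  set f : U →ₗ[ZMod 2] (Fin s → ZMod 2) := φ.comp U.subtype with hf
  have hfker : LinearMap.ker f = ⊥ := by
    rw [LinearMap.ker_eq_bot']
    intro ⟨x, hx⟩ hfx
    have hxker : x ∈ LinearMap.ker φ := by
      simpa [hf] using hfx
    have : x ∈ LinearMap.ker φ ⊓ U := ⟨hxker, hx⟩
    rw [hdisj] at this
    simpa using this
  have hfinj : Function.Injective f := LinearMap.ker_eq_bot.mp hfker
  have hrange : LinearMap.range f = ⊤ := by
    apply Submodule.eq_top_of_finrank_eq
    rw [LinearMap.finrank_range_of_inj hfinj, hU]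
    simp
  have : (fun _ => 1 : Fin s → ZMod 2) ∈ LinearMap.range f := by
    rw [hrange]; trivial
  obtain ⟨⟨c, hcU⟩, hc⟩ := this
  refine ⟨c, hUA hcU, fun j => ?_⟩
  rw [← hφ_apply]
  have : φ c = fun _ => 1 := by simpa [hf] using hc
  rw [this]
end
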